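/- arXiv:0805.3516 — 5 statements merged into one kernel-verified Lean document; each statement's English description precedes it below -/
import Mathlib

section
/- Let n ≥ 1 and let α_0, …, α_{n−1} ∈ ℂ satisfy |α_k| ≤ 1 for all k. Let Φ_k, Φ_k^* be the Szegő polynomials built from these coefficients, and let C_n be the associated n×n CMV matrix. Then det(zI − C_n) = Φ_n(z) for all z ∈ ℂ, and det(I − z·conj(C_n)) = Φ_n^*(z), where conj(C_n) is the entrywise complex conjugate of C_n. In particular det(I − C_n) = Φ_n(1) = conj(Φ_n^*(1)). -/
open MeasureTheory ProbabilityTheory Filter Topology Finset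

noncomputable section

/-- Szegő polynomials `(Φ_k, Φ_k^*)` built from Verblunsky coefficients `α`. -/
def szegoPair (α : ℕ → ℂ) : ℕ → (ℂ → ℂ) × (ℂ → ℂ)
  | 0 => (fun _ => 1, fun _ => 1)
  | k + 1 =>
      (fun z => z * (szegoPair α k).1 z - (starRingEnd ℂ) (α k) * (szegoPair α k).2 z,
       fun z => (szegoPair α k).2 z - z * α k * (szegoPair α k).1 z)

def szegoPhi (α : ℕ → ℂ) (k : ℕ) (z : ℂ) : ℂ := (szegoPair α k).1 z

def szegoPhiStar (α : ℕ → ℂ) (k : ℕ) (z : ℂ) : ℂ := (szegoPair α k).2 z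

def cmvRho (α : ℕ → ℂ) (k : ℕ) : ℂ := (Real.sqrt (1 - ‖α k‖ ^ 2) : ℝ)

/-- The matrix `L = diag(Ξ₀, Ξ₂, Ξ₄, …)`. -/
def cmvL (α : ℕ → ℂ) (n : ℕ) : Matrix (Fin n) (Fin n) ℂ := fun i j =>
  if i = j then (if i.val % 2 = 0 then (starRingEnd ℂ) (α i.val) else -α (i.val - 1))
  else if j.val = i.val + 1 ∧ i.val % 2 = 0 then cmvRho α i.val
  else if i.val = j.val + 1 ∧ j.val % 2 = 0 then cmvRho α j.val
  else 0

/-- The matrix `M = diag(Ξ₋₁, Ξ₁, Ξ₃, …)`. -/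
def cmvM (α : ℕ → ℂ) (n : ℕ) : Matrix (Fin n) (Fin n) ℂ := fun i j =>
  if i = j then
    (if i.val = 0 then 1 else if i.val % 2 = 1 then (starRingEnd ℂ) (α i.val) else -α (i.val - 1))
  else if j.val = i.val + 1 ∧ i.val % 2 = 1 then cmvRho α i.val
  else if i.val = j.val + 1 ∧ j.val % 2 = 1 then cmvRho α j.val
  else 0

/-- The CMV matrix `C = L·M`. -/
def cmvMatrix (α : ℕ → ℂ) (n : ℕ) : Matrix (Fin n) (Fin n) ℂ := cmvL α n * cmvM α n

/-- Geronimus relation: off-diagonal entry `a_{k+1}`. -/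
def geronA (α : ℤ → ℝ) (k : ℕ) : ℝ :=
  Real.sqrt ((1 - α (2*k - 1)) * (1 - α (2*k) ^ 2) * (1 + α (2*k + 1)))

/-- Geronimus relation: diagonal entry `b_{k+1}`. -/
def geronB (α : ℤ → ℝ) (k : ℕ) : ℝ :=
  (1 - α (2*k - 1)) * α (2*k) - (1 + α (2*k - 1)) * α (2*k - 2)

/-- The `n×n` Jacobi matrix with entries given by the Geronimus relations. -/
def jacobiMatrix (α : ℤ → ℝ) (n : ℕ) : Matrix (Fin n) (Fin n) ℝ := fun i j =>
  if i = j then geronB α i.val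
  else if j.val = i.val + 1 then geronA α i.val
  else if i.val = j.val + 1 then geronA α j.val
  else 0

/-- The Beta distribution `B_{[0,1]}(s,t)` on `[0,1]`. -/
def betaUnitMeasure (s t : ℝ) : Measure ℝ :=
  (volume.restrict (Set.Icc (0:ℝ) 1)).withDensity
    (fun x => ENNReal.ofReal
      (Real.Gamma (s+t) / (Real.Gamma s * Real.Gamma t) * x ^ (s-1) * (1-x) ^ (t-1)))

/-- The Beta distribution `B_{[-1,1]}(s,t)` on `[-1,1]`. -/
def betaSymmMeasure (s t : ℝ) : Measure ℝ :=
  (volume.restrict (Set.Icc (-1:ℝ) 1)).withDensity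
    (fun x => ENNReal.ofReal
      (2 ^ (1-s-t) * Real.Gamma (s+t) / (Real.Gamma s * Real.Gamma t)
        * (1-x) ^ (s-1) * (1+x) ^ (t-1)))

/-- The uniform distribution on `[0, 2π)`. -/
def uniformIcoMeasure : Measure ℝ :=
  (ENNReal.ofReal (2 * Real.pi))⁻¹ • volume.restrict (Set.Ico 0 (2 * Real.pi))

/-- The distribution `Θ_ν`: for `ν > 1` it has density `((ν−1)/2)(1−|z|²)^{(ν−3)/2}/π`
on the unit disk; `Θ₁` is the uniform distribution on the unit circle. -/
def thetaMeasure (ν : ℝ) : Measure ℂ :=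
  if ν = 1 then
    Measure.map (fun θ : ℝ => Complex.exp (θ * Complex.I)) uniformIcoMeasure
  else
    (volume.restrict (Metric.ball (0:ℂ) 1)).withDensity
      (fun z => ENNReal.ofReal
        ((ν - 1) / 2 * (1 - ‖z‖ ^ 2) ^ ((ν - 3) / 2) / Real.pi))

/-- The circular β-ensemble `CβE(n)` on `[0,2π)ⁿ`: density
`(1/Z_n^β)|Δ(e^{iη})|^β` with respect to `∏ dη_j/(2π)`. -/
def circularEnsemble (β : ℝ) (n : ℕ) : Measure (Fin n → ℝ) :=
  (volume.restrict (Set.univ.pi fun _ : Fin n => Set.Ico 0 (2 * Real.pi))).withDensity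
    (fun η => ENNReal.ofReal
      (Real.Gamma (β/2 + 1) ^ n / Real.Gamma (n * β/2 + 1) / (2 * Real.pi) ^ n
        * ∏ i : Fin n, ∏ j ∈ Finset.Ioi i,
            ‖Complex.exp (η j * Complex.I) - Complex.exp (η i * Complex.I)‖ ^ β))

/-- The Jacobi β-ensemble `JβE_{a,b}(n)` on `[-2,2]ⁿ`: the normalized measure with density
proportional to `|Δ(x)|^β ∏ (2-x_j)^a (2+x_j)^b`. -/
def jacobiEnsemble (β a b : ℝ) (n : ℕ) : Measure (Fin n → ℝ) :=
  let μ : Measure (Fin n → ℝ) :=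
    (volume.restrict (Set.univ.pi fun _ : Fin n => Set.Icc (-2:ℝ) 2)).withDensity
      (fun x => ENNReal.ofReal
        ((∏ i : Fin n, ∏ j ∈ Finset.Ioi i, |x j - x i|) ^ β
          * ∏ j : Fin n, (2 - x j) ^ a * (2 + x j) ^ b))
  (μ Set.univ)⁻¹ • μ

/-- The law of the `k`-th Verblunsky coefficient for the Jacobi β-ensemble. -/
def jacobiAlphaLaw (β a b : ℝ) (k : ℕ) : Measure ℝ :=
  if k % 2 = 0 then
    betaSymmMeasure ((k/4 : ℝ) * β + a + 1) ((k/4 : ℝ) * β + b + 1)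
  else
    betaSymmMeasure ((((k:ℝ)-1)/4) * β + a + b + 2) ((((k:ℝ)+1)/4) * β)


namespace CMVAux

/-- entries of `L` as a function on `ℕ`. -/
def lE (α : ℕ → ℂ) (i j : ℕ) : ℂ :=
  if i = j then (if i % 2 = 0 then (starRingEnd ℂ) (α i) else -α (i - 1))
  else if j = i + 1 ∧ i % 2 = 0 then cmvRho α i
  else if i = j + 1 ∧ j % 2 = 0 then cmvRho α j
  else 0

/-- entries of `M` as a function on `ℕ`. -/
def mE (α : ℕ → ℂ) (i j : ℕ) : ℂ :=
  if i = j then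
    (if i = 0 then 1 else if i % 2 = 1 then (starRingEnd ℂ) (α i) else -α (i - 1))
  else if j = i + 1 ∧ i % 2 = 1 then cmvRho α i
  else if i = j + 1 ∧ j % 2 = 1 then cmvRho α j
  else 0

variable {α : ℕ → ℂ}

lemma cmvL_apply {n : ℕ} (α : ℕ → ℂ) (i j : Fin n) : cmvL α n i j = lE α i.val j.val := by
  by_cases h : i = j
  · simp [cmvL, lE, h]
  · have h' : i.val ≠ j.val := fun hh => h (Fin.ext hh)
    simp [cmvL, lE, h, h']

lemma cmvM_apply {n : ℕ} (α : ℕ → ℂ) (i j : Fin n) : cmvM α n i j = mE α i.val j.val := by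
  by_cases h : i = j
  · simp [cmvM, lE, h, mE]
  · have h' : i.val ≠ j.val := fun hh => h (Fin.ext hh)
    simp [cmvM, lE, h, h', mE]

lemma conj_rho (k : ℕ) : (starRingEnd ℂ) (cmvRho α k) = cmvRho α k := by
  simp [cmvRho]

lemma rho_mul_self {k : ℕ} (h : ‖α k‖ ≤ 1) :
    cmvRho α k * cmvRho α k = 1 - (starRingEnd ℂ) (α k) * α k := by
  have h0 : (0:ℝ) ≤ 1 - ‖α k‖ ^ 2 := by nlinarith [norm_nonneg (α k)]
  have h1 : (starRingEnd ℂ) (α k) * α k = ((‖α k‖ ^ 2 : ℝ) : ℂ) := by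
    rw [mul_comm, Complex.mul_conj, Complex.normSq_eq_norm_sq]
  rw [cmvRho, ← Complex.ofReal_mul, Real.mul_self_sqrt h0, h1]
  push_cast; ring

-- entry lemmas for lE
lemma lE_diag_even {k : ℕ} (h : k % 2 = 0) : lE α k k = (starRingEnd ℂ) (α k) := by
  simp only [lE]; split_ifs <;> first | rfl | (exfalso; omega) | (exfalso; simp only [true_and] at *; omega)

lemma lE_diag_odd {k : ℕ} (h : k % 2 = 1) : lE α k k = -α (k - 1) := by
  simp only [lE]; split_ifs <;> first | rfl | (exfalso; omega) | (exfalso; simp only [true_and] at *; omega)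

lemma lE_above_even {k : ℕ} (h : k % 2 = 0) : lE α k (k+1) = cmvRho α k := by
  simp only [lE]; split_ifs <;> first | rfl | (exfalso; omega) | (exfalso; simp only [true_and] at *; omega)

lemma lE_below_even {k : ℕ} (h : k % 2 = 0) : lE α (k+1) k = cmvRho α k := by
  simp only [lE]; split_ifs <;> first | rfl | (exfalso; omega) | (exfalso; simp only [true_and] at *; omega)

lemma lE_above_odd {k : ℕ} (h : k % 2 = 1) : lE α k (k+1) = 0 := by
  simp only [lE]; split_ifs <;> first | rfl | (exfalso; omega) | (exfalso; simp only [true_and] at *; omega)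

lemma lE_below_odd {k : ℕ} (h : k % 2 = 1) : lE α (k+1) k = 0 := by
  simp only [lE]; split_ifs <;> first | rfl | (exfalso; omega) | (exfalso; simp only [true_and] at *; omega)

lemma lE_zero {i j : ℕ} (h : i - i % 2 ≠ j - j % 2) : lE α i j = 0 := by
  simp only [lE]; split_ifs <;> first | rfl | (exfalso; omega) | (exfalso; simp only [true_and] at *; omega)

-- entry lemmas for mE
lemma mE_zero_zero : mE α 0 0 = 1 := by
  simp only [mE]; split_ifs <;> first | rfl | (exfalso; omega) | (exfalso; simp only [true_and] at *; omega)

lemma mE_diag_odd {k : ℕ} (h : k % 2 = 1) : mE α k k = (starRingEnd ℂ) (α k) := by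
  simp only [mE]; split_ifs <;> first | rfl | (exfalso; omega) | (exfalso; simp only [true_and] at *; omega)

lemma mE_diag_even {k : ℕ} (h : k % 2 = 0) (h0 : k ≠ 0) : mE α k k = -α (k - 1) := by
  simp only [mE]; split_ifs <;> first | rfl | (exfalso; omega) | (exfalso; simp only [true_and] at *; omega)

lemma mE_above_odd {k : ℕ} (h : k % 2 = 1) : mE α k (k+1) = cmvRho α k := by
  simp only [mE]; split_ifs <;> first | rfl | (exfalso; omega) | (exfalso; simp only [true_and] at *; omega)

lemma mE_below_odd {k : ℕ} (h : k % 2 = 1) : mE α (k+1) k = cmvRho α k := by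
  simp only [mE]; split_ifs <;> first | rfl | (exfalso; omega) | (exfalso; simp only [true_and] at *; omega)

lemma mE_above_even {k : ℕ} (h : k % 2 = 0) : mE α k (k+1) = 0 := by
  simp only [mE]; split_ifs <;> first | rfl | (exfalso; omega) | (exfalso; simp only [true_and] at *; omega)

lemma mE_below_even {k : ℕ} (h : k % 2 = 0) : mE α (k+1) k = 0 := by
  simp only [mE]; split_ifs <;> first | rfl | (exfalso; omega) | (exfalso; simp only [true_and] at *; omega)

lemma mE_zero {i j : ℕ} (h : (i+1) - (i+1) % 2 ≠ (j+1) - (j+1) % 2) : mE α i j = 0 := by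
  simp only [mE]; split_ifs <;> first | rfl | (exfalso; omega) | (exfalso; simp only [true_and] at *; omega)


/-- leading principal `k×k` submatrix of an infinite matrix. -/
def princ (T : ℕ → ℕ → ℂ) (k : ℕ) : Matrix (Fin k) (Fin k) ℂ :=
  Matrix.of fun i j => T i.val j.val

lemma det_princ_one (T : ℕ → ℕ → ℂ) : (princ T 1).det = T 0 0 := by
  rw [Matrix.det_fin_one]; rfl

lemma det_princ_step (T : ℕ → ℕ → ℂ)
    (hT : ∀ i j : ℕ, i + 2 ≤ j ∨ j + 2 ≤ i → T i j = 0) (k : ℕ) :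
    (princ T (k + 2)).det = T (k+1) (k+1) * (princ T (k+1)).det
      - T (k+1) k * T k (k+1) * (princ T k).det := by
  have e1 : (Fin.castSucc (Fin.last k)).succAbove (Fin.last k) = Fin.last (k+1) := by
    rw [Fin.succAbove_of_le_castSucc _ _ (le_refl _)]
    rfl
  have e2 : ∀ j : Fin k, (Fin.castSucc (Fin.last k)).succAbove (Fin.castSucc j)
      = Fin.castSucc (Fin.castSucc j) := fun j =>
    Fin.succAbove_of_castSucc_lt _ _ (by
      simp only [Fin.lt_def, Fin.coe_castSucc, Fin.val_last]
      exact j.isLt)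
  have hminor : ((princ T (k+2)).submatrix Fin.castSucc
      (Fin.castSucc (Fin.last k)).succAbove).det = T k (k+1) * (princ T k).det := by
    rw [Matrix.det_succ_column _ (Fin.last k), Fin.sum_univ_castSucc]
    have hz : ∀ i : Fin k,
        ((princ T (k+2)).submatrix Fin.castSucc (Fin.castSucc (Fin.last k)).succAbove)
          (Fin.castSucc i) (Fin.last k) = 0 := fun i => by
      rw [Matrix.submatrix_apply, e1]
      exact hT _ _ (Or.inl (by simp only [Fin.coe_castSucc, Fin.val_last]; omega))
    simp only [hz, mul_zero, zero_mul, Finset.sum_const_zero, zero_add]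
    rw [Matrix.submatrix_apply, e1]
    have hsub : (((princ T (k+2)).submatrix Fin.castSucc
        (Fin.castSucc (Fin.last k)).succAbove).submatrix (Fin.last k).succAbove
          (Fin.last k).succAbove) = princ T k := by
      ext i j
      rw [Matrix.submatrix_apply, Matrix.submatrix_apply, Fin.succAbove_last, e2]
      rfl
    rw [hsub]
    have hsign : ((-1:ℂ)) ^ ((Fin.last k : ℕ) + (Fin.last k : ℕ)) = 1 :=
      Even.neg_one_pow ⟨(Fin.last k : ℕ), rfl⟩
    rw [hsign]
    show 1 * T k (k+1) * (princ T k).det = _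
    ring
  rw [Matrix.det_succ_row _ (Fin.last (k+1)), Fin.sum_univ_castSucc, Fin.sum_univ_castSucc]
  simp only [Fin.succAbove_last]
  have hz2 : ∀ j : Fin k,
      (princ T (k+2)) (Fin.last (k+1)) (Fin.castSucc (Fin.castSucc j)) = 0 := fun j =>
    hT _ _ (Or.inr (by simp only [Fin.coe_castSucc, Fin.val_last]; omega))
  simp only [hz2, mul_zero, zero_mul, Finset.sum_const_zero, zero_add]
  have hsub1 : (princ T (k+2)).submatrix Fin.castSucc Fin.castSucc
      = princ T (k+1) := by
    ext i j
    rw [Matrix.submatrix_apply]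
    rfl
  rw [hsub1, hminor]
  have hv1 : ((Fin.last (k+1) : Fin (k+2)) : ℕ) = k + 1 := rfl
  have hv2 : ((Fin.castSucc (Fin.last k) : Fin (k+2)) : ℕ) = k := rfl
  have hval1 : (princ T (k+2)) (Fin.last (k+1)) (Fin.castSucc (Fin.last k)) = T (k+1) k := rfl
  have hval2 : (princ T (k+2)) (Fin.last (k+1)) (Fin.last (k+1)) = T (k+1) (k+1) := rfl
  rw [hval1, hval2, hv1, hv2]
  have hs1 : ((-1:ℂ)) ^ (k + 1 + k) = -1 := Odd.neg_one_pow ⟨k, by ring⟩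
  have hs2 : ((-1:ℂ)) ^ (k + 1 + (k + 1)) = 1 := Even.neg_one_pow ⟨k+1, by ring⟩
  rw [hs1, hs2]
  ring


lemma phi_succ (α : ℕ → ℂ) (k : ℕ) (z : ℂ) :
    szegoPhi α (k+1) z = z * szegoPhi α k z - (starRingEnd ℂ) (α k) * szegoPhiStar α k z := rfl

lemma phiStar_succ (α : ℕ → ℂ) (k : ℕ) (z : ℂ) :
    szegoPhiStar α (k+1) z = szegoPhiStar α k z - z * α k * szegoPhi α k z := rfl

lemma phi_zero (α : ℕ → ℂ) (z : ℂ) : szegoPhi α 0 z = 1 := rfl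
lemma phiStar_zero (α : ℕ → ℂ) (z : ℂ) : szegoPhiStar α 0 z = 1 := rfl

/-- entries of `z·conj(L) − M`. -/
def Aent (α : ℕ → ℂ) (z : ℂ) (i j : ℕ) : ℂ := z * (starRingEnd ℂ) (lE α i j) - mE α i j

/-- entries of `z·conj(M) − L`. -/
def Bent (α : ℕ → ℂ) (z : ℂ) (i j : ℕ) : ℂ := z * (starRingEnd ℂ) (mE α i j) - lE α i j

lemma lE_tri {α : ℕ → ℂ} (i j : ℕ) (h : i + 2 ≤ j ∨ j + 2 ≤ i) : lE α i j = 0 := by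
  simp only [lE]; split_ifs <;> first | rfl | (exfalso; omega) | (exfalso; simp only [true_and] at *; omega)

lemma mE_tri {α : ℕ → ℂ} (i j : ℕ) (h : i + 2 ≤ j ∨ j + 2 ≤ i) : mE α i j = 0 := by
  simp only [mE]; split_ifs <;> first | rfl | (exfalso; omega) | (exfalso; simp only [true_and] at *; omega)

lemma Aent_tri (α : ℕ → ℂ) (z : ℂ) : ∀ i j : ℕ, i + 2 ≤ j ∨ j + 2 ≤ i → Aent α z i j = 0 := by
  intro i j h; rw [Aent, lE_tri i j h, mE_tri i j h]; simp

lemma Bent_tri (α : ℕ → ℂ) (z : ℂ) : ∀ i j : ℕ, i + 2 ≤ j ∨ j + 2 ≤ i → Bent α z i j = 0 := by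
  intro i j h; rw [Bent, lE_tri i j h, mE_tri i j h]; simp

/-- determinants of principal minors of `L`. -/
lemma detL (α : ℕ → ℂ) : ∀ k : ℕ, (∀ j, j + 2 ≤ k → ‖α j‖ ≤ 1) →
    (princ (lE α) k).det =
      if k % 2 = 0 then (-1:ℂ)^(k/2) else (-1:ℂ)^(k/2) * (starRingEnd ℂ) (α (k-1)) := by
  intro k
  induction k using Nat.strong_induction_on with
  | _ k ih =>
    match k with
    | 0 => intro _; simp [princ]
    | 1 => intro _
           rw [det_princ_one, lE_diag_even (by omega)]
           norm_num
    | (k+2) =>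
      intro hα
      rw [det_princ_step _ (fun i j h => lE_tri i j h) k,
        ih (k+1) (by omega) (fun j hj => hα j (by omega)),
        ih k (by omega) (fun j hj => hα j (by omega))]
      rcases Nat.even_or_odd k with he | ho
      · have h2 : k % 2 = 0 := Nat.even_iff.mp he
        have hρ := rho_mul_self (α := α) (k := k) (hα k (by omega))
        rw [lE_diag_odd (k := k+1) (by omega), lE_below_even h2, lE_above_even h2,
          if_pos (by omega : (k+2) % 2 = 0), if_neg (by omega : ¬ (k+1) % 2 = 0),
          if_pos h2,
          show (k+2)/2 = k/2 + 1 by omega, show (k+1)/2 = k/2 by omega,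
          show (k+1) - 1 = k from rfl]
        linear_combination (-((-1:ℂ)^(k/2))) * hρ
      · have h2 : k % 2 = 1 := Nat.odd_iff.mp ho
        rw [lE_diag_even (k := k+1) (by omega), lE_below_odd h2, lE_above_odd h2,
          if_neg (by omega : ¬ (k+2) % 2 = 0), if_pos (by omega : (k+1) % 2 = 0),
          if_neg (by omega : ¬ k % 2 = 0),
          show (k+2)/2 = (k+1)/2 by omega, show (k+2) - 1 = k+1 from rfl]
        ring

/-- determinants of principal minors of `M`. -/
lemma detM (α : ℕ → ℂ) : ∀ k : ℕ, (∀ j, j + 2 ≤ k → ‖α j‖ ≤ 1) →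
    (princ (mE α) k).det =
      if k % 2 = 1 then (-1:ℂ)^(k/2)
      else if k = 0 then 1 else (-1:ℂ)^(k/2+1) * (starRingEnd ℂ) (α (k-1)) := by
  intro k
  induction k using Nat.strong_induction_on with
  | _ k ih =>
    match k with
    | 0 => intro _; simp [princ]
    | 1 => intro _
           rw [det_princ_one, mE_zero_zero]
           norm_num
    | (k+2) =>
      intro hα
      rw [det_princ_step _ (fun i j h => mE_tri i j h) k,
        ih (k+1) (by omega) (fun j hj => hα j (by omega)),
        ih k (by omega) (fun j hj => hα j (by omega))]
      rcases Nat.even_or_odd k with he | ho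
      · have h2 : k % 2 = 0 := Nat.even_iff.mp he
        rw [mE_diag_odd (k := k+1) (by omega), mE_below_even h2, mE_above_even h2,
          if_neg (by omega : ¬ (k+2) % 2 = 1), if_neg (by omega : ¬ k + 2 = 0),
          if_pos (by omega : (k+1) % 2 = 1),
          show (k+2)/2 + 1 = k/2 + 2 by omega, show (k+1)/2 = k/2 by omega,
          show (k+2) - 1 = k+1 from rfl]
        ring
      · have h2 : k % 2 = 1 := Nat.odd_iff.mp ho
        have hρ := rho_mul_self (α := α) (k := k) (hα k (by omega))
        rw [mE_diag_even (k := k+1) (by omega) (by omega), mE_below_odd h2, mE_above_odd h2,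
          if_pos (by omega : (k+2) % 2 = 1), if_neg (by omega : ¬ (k+1) % 2 = 1),
          if_neg (by omega : ¬ k+1 = 0), if_pos h2,
          show (k+2)/2 = k/2 + 1 by omega, show (k+1)/2 + 1 = k/2 + 2 by omega,
          show (k+1) - 1 = k from rfl]
        linear_combination (-((-1:ℂ)^(k/2))) * hρ


/-- characteristic-type determinants of minors of `z·conj(L) − M`. -/
lemma detA (α : ℕ → ℂ) (z : ℂ) : ∀ k : ℕ, (∀ j, j + 2 ≤ k → ‖α j‖ ≤ 1) →
    (princ (Aent α z) k).det =
      if k % 2 = 0 then (-1:ℂ)^(k/2) * szegoPhi α k z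
      else (-1:ℂ)^(k/2+1) * szegoPhiStar α k z := by
  intro k
  induction k using Nat.strong_induction_on with
  | _ k ih =>
    match k with
    | 0 => intro _; simp [princ, phi_zero]
    | 1 => intro _
           rw [det_princ_one, if_neg (by omega), Aent, lE_diag_even (by omega), mE_zero_zero,
             phiStar_succ, phiStar_zero, phi_zero]
           simp only [Complex.conj_conj]
           norm_num
    | (k+2) =>
      intro hα
      rw [det_princ_step _ (Aent_tri α z) k,
        ih (k+1) (by omega) (fun j hj => hα j (by omega)),
        ih k (by omega) (fun j hj => hα j (by omega))]
      have hρ := rho_mul_self (α := α) (k := k) (hα k (by omega))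
      rcases Nat.even_or_odd k with he | ho
      · have h2 : k % 2 = 0 := Nat.even_iff.mp he
        have hd : Aent α z (k+1) (k+1) = -(z * (starRingEnd ℂ) (α k)) - (starRingEnd ℂ) (α (k+1)) := by
          rw [Aent, lE_diag_odd (k := k+1) (by omega), mE_diag_odd (k := k+1) (by omega),
            show (k+1) - 1 = k from rfl, map_neg]
          ring
        have ho1 : Aent α z (k+1) k = z * cmvRho α k := by
          rw [Aent, lE_below_even h2, mE_below_even h2, conj_rho]
          ring
        have ho2 : Aent α z k (k+1) = z * cmvRho α k := by
          rw [Aent, lE_above_even h2, mE_above_even h2, conj_rho]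
          ring
        rw [hd, ho1, ho2,
          if_pos (by omega : (k+2) % 2 = 0), if_neg (by omega : ¬ (k+1) % 2 = 0),
          if_pos h2, show (k+2)/2 = k/2 + 1 by omega, show (k+1)/2 = k/2 by omega,
          phi_succ α (k+1) z, phi_succ α k z, phiStar_succ α k z]
        linear_combination (-((-1:ℂ)^(k/2) * z^2 * szegoPhi α k z)) * hρ
      · have h2 : k % 2 = 1 := Nat.odd_iff.mp ho
        have hd : Aent α z (k+1) (k+1) = z * α (k+1) + α k := by
          rw [Aent, lE_diag_even (k := k+1) (by omega), mE_diag_even (k := k+1) (by omega) (by omega),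
            show (k+1) - 1 = k from rfl, Complex.conj_conj]
          ring
        have ho1 : Aent α z (k+1) k = -cmvRho α k := by
          rw [Aent, lE_below_odd h2, mE_below_odd h2, map_zero]
          ring
        have ho2 : Aent α z k (k+1) = -cmvRho α k := by
          rw [Aent, lE_above_odd h2, mE_above_odd h2, map_zero]
          ring
        rw [hd, ho1, ho2,
          if_neg (by omega : ¬ (k+2) % 2 = 0), if_pos (by omega : (k+1) % 2 = 0),
          if_neg (by omega : ¬ k % 2 = 0),
          show (k+2)/2 + 1 = k/2 + 2 by omega, show (k+1)/2 = k/2 + 1 by omega,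
          phiStar_succ α (k+1) z, phi_succ α k z, phiStar_succ α k z]
        linear_combination ((-1:ℂ)^(k/2) * szegoPhiStar α k z) * hρ

/-- characteristic-type determinants of minors of `z·conj(M) − L`. -/
lemma detB (α : ℕ → ℂ) (z : ℂ) : ∀ k : ℕ, (∀ j, j + 2 ≤ k → ‖α j‖ ≤ 1) →
    (princ (Bent α z) k).det =
      if k % 2 = 0 then (-1:ℂ)^(k/2) * szegoPhiStar α k z
      else (-1:ℂ)^(k/2) * szegoPhi α k z := by
  intro k
  induction k using Nat.strong_induction_on with
  | _ k ih =>
    match k with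
    | 0 => intro _; simp [princ, phiStar_zero]
    | 1 => intro _
           rw [det_princ_one, if_neg (by omega), Bent, lE_diag_even (by omega), mE_zero_zero,
             phi_succ, phiStar_zero, phi_zero]
           norm_num
    | (k+2) =>
      intro hα
      rw [det_princ_step _ (Bent_tri α z) k,
        ih (k+1) (by omega) (fun j hj => hα j (by omega)),
        ih k (by omega) (fun j hj => hα j (by omega))]
      have hρ := rho_mul_self (α := α) (k := k) (hα k (by omega))
      rcases Nat.even_or_odd k with he | ho
      · have h2 : k % 2 = 0 := Nat.even_iff.mp he
        have hd : Bent α z (k+1) (k+1) = z * α (k+1) + α k := by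
          rw [Bent, mE_diag_odd (k := k+1) (by omega), lE_diag_odd (k := k+1) (by omega),
            show (k+1) - 1 = k from rfl, Complex.conj_conj]
          ring
        have ho1 : Bent α z (k+1) k = -cmvRho α k := by
          rw [Bent, mE_below_even h2, lE_below_even h2, map_zero]
          ring
        have ho2 : Bent α z k (k+1) = -cmvRho α k := by
          rw [Bent, mE_above_even h2, lE_above_even h2, map_zero]
          ring
        rw [hd, ho1, ho2,
          if_pos (by omega : (k+2) % 2 = 0), if_neg (by omega : ¬ (k+1) % 2 = 0),
          if_pos h2, show (k+2)/2 = k/2 + 1 by omega, show (k+1)/2 = k/2 by omega,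
          phiStar_succ α (k+1) z, phi_succ α k z, phiStar_succ α k z]
        linear_combination (-((-1:ℂ)^(k/2) * szegoPhiStar α k z)) * hρ
      · have h2 : k % 2 = 1 := Nat.odd_iff.mp ho
        have hd : Bent α z (k+1) (k+1) = -(z * (starRingEnd ℂ) (α k)) - (starRingEnd ℂ) (α (k+1)) := by
          rw [Bent, mE_diag_even (k := k+1) (by omega) (by omega), lE_diag_even (k := k+1) (by omega),
            show (k+1) - 1 = k from rfl, map_neg]
          ring
        have ho1 : Bent α z (k+1) k = z * cmvRho α k := by
          rw [Bent, mE_below_odd h2, lE_below_odd h2, conj_rho]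
          ring
        have ho2 : Bent α z k (k+1) = z * cmvRho α k := by
          rw [Bent, mE_above_odd h2, lE_above_odd h2, conj_rho]
          ring
        rw [hd, ho1, ho2,
          if_neg (by omega : ¬ (k+2) % 2 = 0), if_pos (by omega : (k+1) % 2 = 0),
          if_neg (by omega : ¬ k % 2 = 0),
          show (k+2)/2 = k/2 + 1 by omega, show (k+1)/2 = k/2 + 1 by omega,
          phi_succ α (k+1) z, phi_succ α k z, phiStar_succ α k z]
        linear_combination (-((-1:ℂ)^(k/2) * z^2 * szegoPhi α k z)) * hρ


lemma L_mul_conj (α : ℕ → ℂ) (n : ℕ) (hn : n % 2 = 0)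
    (hα : ∀ k < n, ‖α k‖ ≤ 1) :
    cmvL α n * (cmvL α n).map (starRingEnd ℂ) = 1 := by
  ext i j
  rw [Matrix.mul_apply]
  have hi := i.isLt
  have hj := j.isLt
  set p : ℕ := i.val - i.val % 2 with hp
  have hp2 : p % 2 = 0 := by omega
  have hpn : p + 1 < n := by omega
  have hab : (⟨p, by omega⟩ : Fin n) ≠ ⟨p+1, hpn⟩ := by
    simp [Fin.ext_iff]
  have hρ := rho_mul_self (α := α) (k := p) (hα p (by omega))
  have hsum : ∑ k : Fin n, cmvL α n i k * (cmvL α n).map (starRingEnd ℂ) k j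
      = ∑ k ∈ ({⟨p, by omega⟩, ⟨p+1, hpn⟩} : Finset (Fin n)),
          cmvL α n i k * (cmvL α n).map (starRingEnd ℂ) k j := by
    refine (Finset.sum_subset (Finset.subset_univ _) fun x _ hx => ?_).symm
    have hx1 : x.val ≠ p ∧ x.val ≠ p + 1 := by
      constructor <;> (intro hh; apply hx; simp [Fin.ext_iff, hh])
    have : cmvL α n i x = 0 := by
      rw [cmvL_apply]
      exact lE_zero (by omega)
    rw [this, zero_mul]
  rw [hsum, Finset.sum_pair hab]
  simp only [Matrix.map_apply, cmvL_apply]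
  by_cases hjb : j.val - j.val % 2 = p
  · have hi2 : i.val = p ∨ i.val = p + 1 := by omega
    have hj2 : j.val = p ∨ j.val = p + 1 := by omega
    rcases hi2 with h | h <;> rcases hj2 with h' | h'
    · rw [show i = j from Fin.ext (by omega), Matrix.one_apply_eq, h']
      simp only [lE_diag_even hp2, lE_above_even hp2, lE_below_even hp2,
        lE_diag_odd (k := p+1) (show (p+1) % 2 = 1 by omega), conj_rho, map_neg,
        Complex.conj_conj, Nat.add_sub_cancel]
      linear_combination hρ
    · rw [Matrix.one_apply_ne (by simp [Fin.ext_iff]; omega), h, h']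
      simp only [lE_diag_even hp2, lE_above_even hp2, lE_below_even hp2,
        lE_diag_odd (k := p+1) (show (p+1) % 2 = 1 by omega), conj_rho, map_neg,
        Complex.conj_conj, Nat.add_sub_cancel]
      ring
    · rw [Matrix.one_apply_ne (by simp [Fin.ext_iff]; omega), h, h']
      simp only [lE_diag_even hp2, lE_above_even hp2, lE_below_even hp2,
        lE_diag_odd (k := p+1) (show (p+1) % 2 = 1 by omega), conj_rho, map_neg,
        Complex.conj_conj, Nat.add_sub_cancel]
      ring
    · rw [show i = j from Fin.ext (by omega), Matrix.one_apply_eq, h']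
      simp only [lE_diag_even hp2, lE_above_even hp2, lE_below_even hp2,
        lE_diag_odd (k := p+1) (show (p+1) % 2 = 1 by omega), conj_rho, map_neg,
        Complex.conj_conj, Nat.add_sub_cancel]
      linear_combination hρ
  · rw [Matrix.one_apply_ne (by simp [Fin.ext_iff]; omega),
      lE_zero (i := p) (j := j.val) (by omega), lE_zero (i := p+1) (j := j.val) (by omega)]
    simp

lemma M_mul_conj (α : ℕ → ℂ) (n : ℕ) (hn : n % 2 = 1)
    (hα : ∀ k < n, ‖α k‖ ≤ 1) :
    cmvM α n * (cmvM α n).map (starRingEnd ℂ) = 1 := by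
  ext i j
  rw [Matrix.mul_apply]
  have hi := i.isLt
  have hj := j.isLt
  by_cases hi0 : i.val = 0
  · rw [Finset.sum_eq_single (⟨0, by omega⟩ : Fin n)]
    · rw [Matrix.map_apply, cmvM_apply, cmvM_apply, hi0]
      rw [show ((⟨0, by omega⟩ : Fin n) : ℕ) = 0 by rfl, mE_zero_zero, one_mul]
      by_cases hj0 : j.val = 0
      · rw [show i = j from Fin.ext (by omega), Matrix.one_apply_eq, hj0, mE_zero_zero, map_one]
      · rw [Matrix.one_apply_ne (by simp [Fin.ext_iff]; omega),
          mE_zero (by omega), map_zero]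
    · intro b _ hb
      have hb0 : b.val ≠ 0 := fun hh => hb (Fin.ext (by rw [hh]))
      rw [cmvM_apply, hi0, mE_zero (i := 0) (j := b.val) (by omega), zero_mul]
    · intro h; exact absurd (Finset.mem_univ _) h
  · set q : ℕ := i.val - (1 + i.val) % 2 with hq
    have hq2 : q % 2 = 1 := by omega
    have hqn : q + 1 < n := by omega
    have hab : (⟨q, by omega⟩ : Fin n) ≠ ⟨q+1, hqn⟩ := by simp [Fin.ext_iff]
    have hρ := rho_mul_self (α := α) (k := q) (hα q (by omega))
    have hsum : ∑ k : Fin n, cmvM α n i k * (cmvM α n).map (starRingEnd ℂ) k j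
        = ∑ k ∈ ({⟨q, by omega⟩, ⟨q+1, hqn⟩} : Finset (Fin n)),
            cmvM α n i k * (cmvM α n).map (starRingEnd ℂ) k j := by
      refine (Finset.sum_subset (Finset.subset_univ _) fun x _ hx => ?_).symm
      have hx1 : x.val ≠ q ∧ x.val ≠ q + 1 := by
        constructor <;> (intro hh; apply hx; simp [Fin.ext_iff, hh])
      have : cmvM α n i x = 0 := by
        rw [cmvM_apply]
        exact mE_zero (by omega)
      rw [this, zero_mul]
    rw [hsum, Finset.sum_pair hab]
    simp only [Matrix.map_apply, cmvM_apply]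
    by_cases hjb : j.val - (1 + j.val) % 2 = q ∧ j.val ≠ 0
    · have hi2 : i.val = q ∨ i.val = q + 1 := by omega
      have hj2 : j.val = q ∨ j.val = q + 1 := by omega
      rcases hi2 with h | h <;> rcases hj2 with h' | h'
      · rw [show i = j from Fin.ext (by omega), Matrix.one_apply_eq, h']
        simp only [mE_diag_odd hq2, mE_above_odd hq2, mE_below_odd hq2,
          mE_diag_even (k := q+1) (show (q+1) % 2 = 0 by omega) (by omega), conj_rho, map_neg,
          Complex.conj_conj, Nat.add_sub_cancel]
        linear_combination hρ
      · rw [Matrix.one_apply_ne (by simp [Fin.ext_iff]; omega), h, h']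
        simp only [mE_diag_odd hq2, mE_above_odd hq2, mE_below_odd hq2,
          mE_diag_even (k := q+1) (show (q+1) % 2 = 0 by omega) (by omega), conj_rho, map_neg,
          Complex.conj_conj, Nat.add_sub_cancel]
        ring
      · rw [Matrix.one_apply_ne (by simp [Fin.ext_iff]; omega), h, h']
        simp only [mE_diag_odd hq2, mE_above_odd hq2, mE_below_odd hq2,
          mE_diag_even (k := q+1) (show (q+1) % 2 = 0 by omega) (by omega), conj_rho, map_neg,
          Complex.conj_conj, Nat.add_sub_cancel]
        ring
      · rw [show i = j from Fin.ext (by omega), Matrix.one_apply_eq, h']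
        simp only [mE_diag_odd hq2, mE_above_odd hq2, mE_below_odd hq2,
          mE_diag_even (k := q+1) (show (q+1) % 2 = 0 by omega) (by omega), conj_rho, map_neg,
          Complex.conj_conj, Nat.add_sub_cancel]
        linear_combination hρ
    · rw [Matrix.one_apply_ne (by simp [Fin.ext_iff]; omega),
        mE_zero (i := q) (j := j.val) (by omega), mE_zero (i := q+1) (j := j.val) (by omega)]
      simp


lemma phi_one_conj (α : ℕ → ℂ) (k : ℕ) :
    szegoPhi α k 1 = (starRingEnd ℂ) (szegoPhiStar α k 1) := by
  induction k with
  | zero => simp [phi_zero, phiStar_zero]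
  | succ k ih =>
    have h2 : (starRingEnd ℂ) (szegoPhi α k 1) = szegoPhiStar α k 1 := by
      rw [ih, Complex.conj_conj]
    rw [phi_succ, phiStar_succ, map_sub, map_mul, map_mul, map_one, h2, ih]
    ring

end CMVAux

/-- **Proposition 2.2**: `det(zI − C_n) = Φ_n(z)`, `det(I − z·conj(C_n)) = Φ_n^*(z)`, and in
particular `det(I − C_n) = Φ_n(1) = conj(Φ_n^*(1))`. -/
theorem cmv_det_eq_szegoPhi (n : ℕ) (hn : 1 ≤ n) (α : ℕ → ℂ)
    (hα : ∀ k < n, ‖α k‖ ≤ 1) :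
    (∀ z : ℂ,
      Matrix.det (z • (1 : Matrix (Fin n) (Fin n) ℂ) - cmvMatrix α n) = szegoPhi α n z ∧
      Matrix.det ((1 : Matrix (Fin n) (Fin n) ℂ)
          - z • (cmvMatrix α n).map (starRingEnd ℂ)) = szegoPhiStar α n z) ∧
    Matrix.det ((1 : Matrix (Fin n) (Fin n) ℂ) - cmvMatrix α n) = szegoPhi α n 1 ∧
    szegoPhi α n 1 = (starRingEnd ℂ) (szegoPhiStar α n 1) := by
  open CMVAux in
  have hLprinc : cmvL α n = CMVAux.princ (CMVAux.lE α) n := by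
    ext i j; rw [CMVAux.cmvL_apply]; rfl
  have hMprinc : cmvM α n = CMVAux.princ (CMVAux.mE α) n := by
    ext i j; rw [CMVAux.cmvM_apply]; rfl
  have hconjC : (cmvMatrix α n).map (starRingEnd ℂ)
      = (cmvL α n).map (starRingEnd ℂ) * (cmvM α n).map (starRingEnd ℂ) := by
    rw [cmvMatrix, Matrix.map_mul]
  have key : ∀ z : ℂ,
      Matrix.det (z • (1 : Matrix (Fin n) (Fin n) ℂ) - cmvMatrix α n) = szegoPhi α n z ∧
      Matrix.det ((1 : Matrix (Fin n) (Fin n) ℂ)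
          - z • (cmvMatrix α n).map (starRingEnd ℂ)) = szegoPhiStar α n z := by
    intro z
    rcases Nat.even_or_odd n with he | ho
    · have h2 : n % 2 = 0 := Nat.even_iff.mp he
      have hL1 := CMVAux.L_mul_conj α n h2 hα
      have hL1' : (cmvL α n).map (starRingEnd ℂ) * cmvL α n = 1 :=
        mul_eq_one_comm.mp hL1
      have hdetL : (cmvL α n).det = (-1:ℂ)^(n/2) := by
        rw [hLprinc, CMVAux.detL α n (fun j hj => hα j (by omega)), if_pos h2]
      constructor
      · have hfac : cmvL α n * (z • (cmvL α n).map (starRingEnd ℂ) - cmvM α n)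
            = z • (1 : Matrix (Fin n) (Fin n) ℂ) - cmvMatrix α n := by
          rw [Matrix.mul_sub, Matrix.mul_smul, hL1, cmvMatrix]
        have hA : z • (cmvL α n).map (starRingEnd ℂ) - cmvM α n
            = CMVAux.princ (CMVAux.Aent α z) n := by
          ext i j
          simp only [Matrix.sub_apply, Matrix.smul_apply, Matrix.map_apply,
            CMVAux.cmvL_apply, CMVAux.cmvM_apply, smul_eq_mul, CMVAux.princ,
            Matrix.of_apply, CMVAux.Aent]
        rw [← hfac, Matrix.det_mul, hA, hdetL,
          CMVAux.detA α z n (fun j hj => hα j (by omega)), if_pos h2]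
        have hpow : ((-1:ℂ))^(n/2) * ((-1:ℂ))^(n/2) = 1 := by
          rw [← pow_add]; exact Even.neg_one_pow ⟨n/2, rfl⟩
        linear_combination (szegoPhi α n z) * hpow
      · have hfac : (cmvL α n).map (starRingEnd ℂ)
              * (cmvL α n - z • (cmvM α n).map (starRingEnd ℂ))
            = (1 : Matrix (Fin n) (Fin n) ℂ) - z • (cmvMatrix α n).map (starRingEnd ℂ) := by
          rw [Matrix.mul_sub, Matrix.mul_smul, hL1', ← hconjC]
        have hB : cmvL α n - z • (cmvM α n).map (starRingEnd ℂ)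
            = -(CMVAux.princ (CMVAux.Bent α z) n) := by
          ext i j
          simp only [Matrix.sub_apply, Matrix.smul_apply, Matrix.map_apply, Matrix.neg_apply,
            CMVAux.cmvL_apply, CMVAux.cmvM_apply, smul_eq_mul, CMVAux.princ,
            Matrix.of_apply, CMVAux.Bent]
          ring
        have hdetLc : ((cmvL α n).map (starRingEnd ℂ)).det = (-1:ℂ)^(n/2) := by
          rw [show (cmvL α n).map ⇑(starRingEnd ℂ) = (starRingEnd ℂ).mapMatrix (cmvL α n) from rfl,
            ← RingHom.map_det, hdetL, map_pow, map_neg, map_one]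
        rw [← hfac, Matrix.det_mul, hB, Matrix.det_neg, hdetLc,
          CMVAux.detB α z n (fun j hj => hα j (by omega)), if_pos h2, Fintype.card_fin]
        have hpow : ((-1:ℂ))^(n/2) * ((-1:ℂ))^n * ((-1:ℂ))^(n/2) = 1 := by
          rw [← pow_add, ← pow_add]
          exact Even.neg_one_pow (Nat.even_iff.mpr (by omega))
        linear_combination (szegoPhiStar α n z) * hpow
    · have h2 : n % 2 = 1 := Nat.odd_iff.mp ho
      have hM1 := CMVAux.M_mul_conj α n h2 hα
      have hM1' : (cmvM α n).map (starRingEnd ℂ) * cmvM α n = 1 :=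
        mul_eq_one_comm.mp hM1
      have hdetM : (cmvM α n).det = (-1:ℂ)^(n/2) := by
        rw [hMprinc, CMVAux.detM α n (fun j hj => hα j (by omega)), if_pos h2]
      constructor
      · have hfac : (z • (cmvM α n).map (starRingEnd ℂ) - cmvL α n) * cmvM α n
            = z • (1 : Matrix (Fin n) (Fin n) ℂ) - cmvMatrix α n := by
          rw [Matrix.sub_mul, Matrix.smul_mul, hM1', cmvMatrix]
        have hB : z • (cmvM α n).map (starRingEnd ℂ) - cmvL α n
            = CMVAux.princ (CMVAux.Bent α z) n := by
          ext i j
          simp only [Matrix.sub_apply, Matrix.smul_apply, Matrix.map_apply,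
            CMVAux.cmvL_apply, CMVAux.cmvM_apply, smul_eq_mul, CMVAux.princ,
            Matrix.of_apply, CMVAux.Bent]
        rw [← hfac, Matrix.det_mul, hB, hdetM,
          CMVAux.detB α z n (fun j hj => hα j (by omega)), if_neg (by omega)]
        have hpow : ((-1:ℂ))^(n/2) * ((-1:ℂ))^(n/2) = 1 := by
          rw [← pow_add]; exact Even.neg_one_pow ⟨n/2, rfl⟩
        linear_combination (szegoPhi α n z) * hpow
      · have hfac : (cmvM α n - z • (cmvL α n).map (starRingEnd ℂ))
              * (cmvM α n).map (starRingEnd ℂ)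
            = (1 : Matrix (Fin n) (Fin n) ℂ) - z • (cmvMatrix α n).map (starRingEnd ℂ) := by
          rw [Matrix.sub_mul, Matrix.smul_mul, hM1, ← hconjC]
        have hA : cmvM α n - z • (cmvL α n).map (starRingEnd ℂ)
            = -(CMVAux.princ (CMVAux.Aent α z) n) := by
          ext i j
          simp only [Matrix.sub_apply, Matrix.smul_apply, Matrix.map_apply, Matrix.neg_apply,
            CMVAux.cmvL_apply, CMVAux.cmvM_apply, smul_eq_mul, CMVAux.princ,
            Matrix.of_apply, CMVAux.Aent]
          ring
        have hdetMc : ((cmvM α n).map (starRingEnd ℂ)).det = (-1:ℂ)^(n/2) := by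
          rw [show (cmvM α n).map ⇑(starRingEnd ℂ) = (starRingEnd ℂ).mapMatrix (cmvM α n) from rfl,
            ← RingHom.map_det, hdetM, map_pow, map_neg, map_one]
        rw [← hfac, Matrix.det_mul, hA, Matrix.det_neg, hdetMc,
          CMVAux.detA α z n (fun j hj => hα j (by omega)), if_neg (by omega), Fintype.card_fin]
        have hpow : ((-1:ℂ))^n * ((-1:ℂ))^(n/2+1) * ((-1:ℂ))^(n/2) = 1 := by
          rw [← pow_add, ← pow_add]
          exact Even.neg_one_pow (Nat.even_iff.mpr (by omega))
        linear_combination (szegoPhiStar α n z) * hpow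
  refine ⟨key, ?_, CMVAux.phi_one_conj α n⟩
  have h := (key 1).1
  rwa [one_smul] at h


end
end

section
/- Let n ≥ 1, let α_0, …, α_{2n−2} be real numbers in [−1, 1], and set α_{2n−1} = −1. Let Φ_k be the Szegő polynomials built from α_0, …, α_{2n−1}. Then for each choice of sign, Φ_{2n}(±1) = 2 ∏_{k=0}^{2n−2} (1 − (±1)^{k+1} α_k). -/
open MeasureTheory ProbabilityTheory Filter Topology Finset

noncomputable section

lemma szego_eval_aux (α : ℕ → ℂ) (hc : ∀ k, (starRingEnd ℂ) (α k) = α k)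
    (ε : ℂ) (hε : ε ^ 2 = 1) (m : ℕ) :
    szegoPhi α m ε = ε ^ m * ∏ k ∈ Finset.range m, (1 - ε ^ (k + 1) * α k) ∧
    szegoPhiStar α m ε = ∏ k ∈ Finset.range m, (1 - ε ^ (k + 1) * α k) := by
  induction m with
  | zero => simp [szegoPhi, szegoPhiStar, szegoPair]
  | succ m ih =>
    obtain ⟨h1, h2⟩ := ih
    have key : ε ^ (m + 1) * ε ^ (m + 1) = 1 := by
      rw [← pow_add, ← two_mul, pow_mul, hε, one_pow]
    constructor
    · show ε * (szegoPair α m).1 ε - (starRingEnd ℂ) (α m) * (szegoPair α m).2 ε = _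
      rw [show (szegoPair α m).1 ε = szegoPhi α m ε from rfl,
        show (szegoPair α m).2 ε = szegoPhiStar α m ε from rfl, h1, h2, hc,
        Finset.prod_range_succ]
      linear_combination (α m * ∏ k ∈ Finset.range m, (1 - ε ^ (k + 1) * α k)) * key
    · show (szegoPair α m).2 ε - ε * α m * (szegoPair α m).1 ε = _
      rw [show (szegoPair α m).1 ε = szegoPhi α m ε from rfl,
        show (szegoPair α m).2 ε = szegoPhiStar α m ε from rfl, h1, h2,
        Finset.prod_range_succ]
      ring

/-- **Lemma 3.3**: if `α_0, …, α_{2n−2} ∈ [−1,1]` are real and `α_{2n−1} = −1`, then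
`Φ_{2n}(±1) = 2 ∏_{k=0}^{2n−2} (1 − (±1)^{k+1} α_k)`. -/
theorem szegoPhi_at_pm_one (n : ℕ) (hn : 1 ≤ n) (α : ℕ → ℝ)
    (hα : ∀ k, k ≤ 2 * n - 2 → α k ∈ Set.Icc (-1 : ℝ) 1)
    (hlast : α (2 * n - 1) = -1)
    (ε : ℝ) (hε : ε = 1 ∨ ε = -1) :
    szegoPhi (fun k => (α k : ℂ)) (2 * n) (ε : ℂ) =
      2 * ∏ k ∈ Finset.range (2 * n - 1), (1 - (ε : ℂ) ^ (k + 1) * (α k : ℂ)) := by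
  have hε2 : (ε : ℂ) ^ 2 = 1 := by
    rcases hε with h | h <;> simp [h]
  have h := (szego_eval_aux (fun k => (α k : ℂ)) (fun k => Complex.conj_ofReal _)
    (ε : ℂ) hε2 (2 * n)).1
  have hm : 2 * n = (2 * n - 1) + 1 := by omega
  rw [h, hm, Finset.prod_range_succ, ← hm]
  have hpow : (ε : ℂ) ^ (2 * n) = 1 := by
    rw [pow_mul, hε2, one_pow]
  rw [hpow, hlast]
  push_cast
  ring

end
end

section
/- Let n ≥ 1, α_{−1} = −1, α_0, …, α_{2n−2} ∈ (−1,1) real, and α_{2n−1} = −1. Let Φ_k, Φ_k^* be the Szegő polynomials built from α_0, …, α_{2n−1}, and let J_n be the n×n Jacobi matrix with entries given by the Geronimus relations. Then Φ_{2n} = Φ_{2n}^* as polynomials, and for every θ ∈ ℝ, det(2 cos θ·I − J_n) = e^{−inθ} Φ_{2n}^*(e^{iθ}). -/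
open MeasureTheory ProbabilityTheory Filter Topology Finset

noncomputable section

/-- Entry function for a symmetric tridiagonal matrix. -/
def knTriEnt (d a : ℕ → ℝ) (i j : ℕ) : ℝ :=
  if i = j then d i else if j = i + 1 then a i else if i = j + 1 then a j else 0

def knTriMat (d a : ℕ → ℝ) (m : ℕ) : Matrix (Fin m) (Fin m) ℝ := fun i j =>
  knTriEnt d a i.val j.val

lemma kn_succAbove_val {n : ℕ} (p : Fin (n+1)) (i : Fin n) :
    (p.succAbove i).val = if i.val < p.val then i.val else i.val + 1 := by
  rw [Fin.succAbove]
  split_ifs with h1 h2 h2 <;>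
    simp_all [Fin.lt_def, Fin.coe_castSucc, Fin.val_succ]

theorem knTriMat_det_rec (d a : ℕ → ℝ) (m : ℕ) :
    (knTriMat d a (m+2)).det
      = d (m+1) * (knTriMat d a (m+1)).det - a m ^ 2 * (knTriMat d a m).det := by
  have hpv : (((Fin.last m).castSucc : Fin (m+2))).val = m := rfl
  have hlv2 : ((Fin.last (m+1)) : Fin (m+2)).val = m+1 := rfl
  have hlv1 : ((Fin.last m) : Fin (m+1)).val = m := rfl
  rw [Matrix.det_succ_row _ (Fin.last (m+1))]
  rw [Fin.sum_univ_castSucc, Fin.sum_univ_castSucc]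
  have hzero : ∀ i : Fin m,
      (-1:ℝ) ^ ((Fin.last (m+1) : Fin (m+2)).val + ((i.castSucc.castSucc : Fin (m+2)) : ℕ))
        * knTriMat d a (m+2) (Fin.last (m+1)) i.castSucc.castSucc
        * ((knTriMat d a (m+2)).submatrix (Fin.last (m+1)).succAbove
            (i.castSucc.castSucc).succAbove).det = 0 := by
    intro i
    have : knTriMat d a (m+2) (Fin.last (m+1)) i.castSucc.castSucc = 0 := by
      show knTriEnt d a (m+1) i.val = 0
      have := i.isLt
      rw [knTriEnt, if_neg (by omega), if_neg (by omega), if_neg (by omega)]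
    rw [this]; ring
  rw [Finset.sum_congr rfl (fun i _ => hzero i), Finset.sum_const_zero, zero_add]
  have hsub1 : (knTriMat d a (m+2)).submatrix (Fin.last (m+1)).succAbove
      (Fin.last (m+1)).succAbove = knTriMat d a (m+1) := by
    rw [Fin.succAbove_last]; ext i j; rfl
  have hent2 : knTriMat d a (m+2) (Fin.last (m+1)) (Fin.last (m+1)) = d (m+1) := by
    show knTriEnt d a (m+1) (m+1) = d (m+1)
    rw [knTriEnt, if_pos rfl]
  have hent1 : knTriMat d a (m+2) (Fin.last (m+1)) (Fin.last m).castSucc = a m := by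
    show knTriEnt d a (m+1) m = a m
    rw [knTriEnt, if_neg (by omega), if_neg (by omega), if_pos rfl]
  set N := (knTriMat d a (m+2)).submatrix (Fin.last (m+1)).succAbove
      ((Fin.last m).castSucc : Fin (m+2)).succAbove with hN
  have hNapp : ∀ (i : Fin (m+1)) (j : Fin (m+1)),
      N i j = knTriEnt d a i.val (if j.val < m then j.val else j.val + 1) := by
    intro i j
    show knTriEnt d a ((Fin.last (m+1)).succAbove i).val
        (((Fin.last m).castSucc : Fin (m+2)).succAbove j).val = _
    rw [Fin.succAbove_last, kn_succAbove_val, hpv]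
    rfl
  have hNdet : N.det = a m * (knTriMat d a m).det := by
    rw [Matrix.det_succ_column N (Fin.last m)]
    rw [Fin.sum_univ_castSucc]
    have hz2 : ∀ i : Fin m,
        (-1:ℝ) ^ (((i.castSucc : Fin (m+1)) : ℕ) + ((Fin.last m : Fin (m+1)) : ℕ))
          * N i.castSucc (Fin.last m)
          * (N.submatrix (i.castSucc).succAbove (Fin.last m).succAbove).det = 0 := by
      intro i
      have : N i.castSucc (Fin.last m) = 0 := by
        rw [hNapp, hlv1, if_neg (by omega)]
        show knTriEnt d a i.val (m+1) = 0
        have := i.isLt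
        rw [knTriEnt, if_neg (by omega), if_neg (by omega), if_neg (by omega)]
      rw [this]; ring
    rw [Finset.sum_congr rfl (fun i _ => hz2 i), Finset.sum_const_zero, zero_add]
    have hNent : N (Fin.last m) (Fin.last m) = a m := by
      rw [hNapp, hlv1, if_neg (by omega)]
      show knTriEnt d a m (m+1) = a m
      rw [knTriEnt, if_neg (by omega), if_pos rfl]
    have hsub2 : N.submatrix (Fin.last m).succAbove (Fin.last m).succAbove
        = knTriMat d a m := by
      rw [Fin.succAbove_last]
      ext i j
      show N i.castSucc j.castSucc = _
      rw [hNapp]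
      have := i.isLt; have hj := j.isLt
      show knTriEnt d a i.val (if (j.val : ℕ) < m then (j.val:ℕ) else j.val + 1)
          = knTriEnt d a i.val j.val
      rw [if_pos hj]
    rw [hNent, hsub2, hlv1]
    have e2 : ((-1:ℝ))^(m+m) = 1 := by
      rw [show m+m = 2*m by ring, pow_mul]; norm_num
    rw [e2]; ring
  rw [hsub1, hent2, hent1, hNdet, hlv2, hpv]
  have e1 : ((-1:ℝ))^((m+1)+m) = -1 := by
    rw [show (m+1)+m = 2*m+1 by ring, pow_succ, pow_mul]; norm_num
  have e2 : ((-1:ℝ))^((m+1)+(m+1)) = 1 := by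
    rw [show (m+1)+(m+1) = 2*(m+1) by ring, pow_mul]; norm_num
  rw [e1, e2]; ring

/-- The coupled recursion from the Geronimus/Szegő two-step reduction. -/
def knRecD (x : ℝ) (α : ℤ → ℝ) : ℕ → ℝ × ℝ
  | 0 => (1, 0)
  | k + 1 =>
      ((x/2 - α (2*k)) * (1 - α (2*k-1)) * (knRecD x α k).1
         + ((x^2-4)/4) * (1 + α (2*k-1)) * (knRecD x α k).2,
       (1 - α (2*k-1)) * (knRecD x α k).1
         + (x/2 + α (2*k)) * (1 + α (2*k-1)) * (knRecD x α k).2)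

theorem knRecD_eq_det (x : ℝ) (α : ℤ → ℝ) (hm1 : α (-1) = -1) :
    ∀ k : ℕ,
    (∀ j : ℕ, j < k →
      geronA α j ^ 2 = (1 - α (2*j - 1)) * (1 - α (2*j) ^ 2) * (1 + α (2*j + 1))) →
    (knRecD x α (k+1)).1
      = (knTriMat (fun i => x - geronB α i) (fun i => - geronA α i) (k+1)).det
    ∧ ((x^2-4)/4) * (1 + α (2*k+1)) * (knRecD x α (k+1)).2
      = (1 + α (2*k+1)) * (x/2 + α (2*k))
          * (knTriMat (fun i => x - geronB α i) (fun i => - geronA α i) (k+1)).det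
        - ((1 - α (2*k-1)) * (1 - α (2*k)^2) * (1 + α (2*k+1)))
          * (knTriMat (fun i => x - geronB α i) (fun i => - geronA α i) k).det := by
  set d : ℕ → ℝ := fun i => x - geronB α i
  set a : ℕ → ℝ := fun i => - geronA α i
  have hdet0 : (knTriMat d a 0).det = 1 := Matrix.det_fin_zero
  have hdet1 : (knTriMat d a 1).det = x - geronB α 0 := by
    rw [Matrix.det_fin_one]; rfl
  have hB0 : geronB α 0 = 2 * α 0 := by
    simp only [geronB]
    norm_num [hm1]
  intro k
  induction k with
  | zero =>
      intro _
      constructor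
      · simp only [knRecD, hdet1, hB0]
        norm_num [hm1]
        ring
      · simp only [knRecD, hdet1, hdet0, hB0]
        norm_num [hm1]
        ring
  | succ k ih =>
      intro hA
      obtain ⟨ih1, ih2⟩ := ih (fun j hj => hA j (by omega))
      have hrec := knTriMat_det_rec d a k
      have hAk := hA k (by omega)
      have hak : a k ^ 2 = (1 - α (2*k - 1)) * (1 - α (2*k) ^ 2) * (1 + α (2*k + 1)) := by
        show (- geronA α k)^2 = _
        rw [neg_pow, ← hAk]; ring
      have hdk : d (k+1) = x - geronB α (k+1) := rfl
      have hBk : geronB α (k+1)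
          = (1 - α (2*k+1)) * α (2*k+2) - (1 + α (2*k+1)) * α (2*k) := by
        simp only [geronB]
        push_cast
        simp only [show 2*((k:ℤ)+1) = 2*(k:ℤ)+2 from by ring,
          show 2*(k:ℤ)+2-1 = 2*(k:ℤ)+1 from by ring,
          show 2*(k:ℤ)+2-2 = 2*(k:ℤ) from by ring]
      have hidx2 : (2*((k:ℤ)+1)) = 2*(k:ℤ)+2 := by ring
      have hidx1 : (2*(k:ℤ)+2-1) = 2*(k:ℤ)+1 := by ring
      have hidx0 : (2*(k:ℤ)+2-2) = 2*(k:ℤ) := by ring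
      have hidx3 : (2*(k:ℤ)+2+1) = 2*(k:ℤ)+3 := by ring
      constructor
      · simp only [knRecD] at ih1 ih2 ⊢
        rw [hrec, hdk, hBk, hak]
        push_cast
        simp only [hidx2, hidx1, hidx0, hidx3]
        linear_combination ih2 + ((x/2 - α (2*(k:ℤ)+2))*(1-α (2*(k:ℤ)+1)))*ih1
      · simp only [knRecD] at ih1 ih2 ⊢
        rw [hrec, hdk, hBk, hak]
        push_cast
        simp only [hidx2, hidx1, hidx0, hidx3]
        linear_combination ((1+α (2*(k:ℤ)+3))*(1-α (2*(k:ℤ)+1))*((x^2-4)/4))*ih1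
          + ((1+α (2*(k:ℤ)+3))*(x/2+α (2*(k:ℤ)+2)))*ih2

theorem kn_circle_side (α : ℤ → ℝ) (hm1 : α (-1) = -1) (x : ℝ) (z : ℂ) (hz : z ≠ 0)
    (hzx : z^2 + 1 = z * (x:ℂ)) : ∀ k : ℕ,
    z * (szegoPhi (fun j => ((α j : ℝ) : ℂ)) (2*k) z
        + szegoPhiStar (fun j => ((α j : ℝ) : ℂ)) (2*k) z)
      = (1 - ((α (2*(k:ℤ)-1) : ℝ) : ℂ)) * z^(k+1) * ((knRecD x α k).1 : ℂ)
    ∧ 2 * z * (szegoPhi (fun j => ((α j : ℝ) : ℂ)) (2*k) z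
        - szegoPhiStar (fun j => ((α j : ℝ) : ℂ)) (2*k) z)
      = (1 + ((α (2*(k:ℤ)-1) : ℝ) : ℂ)) * z^k * (z^2 - 1) * ((knRecD x α k).2 : ℂ) := by
  have hx : (x:ℂ) = (z^2+1)/z := by rw [eq_div_iff hz]; linear_combination -hzx
  intro k
  induction k with
  | zero =>
      constructor
      · simp [szegoPhi, szegoPhiStar, szegoPair, knRecD]
        norm_num [hm1]
        ring
      · simp [szegoPhi, szegoPhiStar, szegoPair, knRecD]
  | succ k ih =>
      obtain ⟨ih1, ih2⟩ := ih
      simp only [szegoPhi, szegoPhiStar] at ih1 ih2 ⊢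
      have h4z : (4:ℂ) * z ≠ 0 := by
        simp [hz]
      set Af : ℕ → ℂ := fun j => ((α j : ℝ) : ℂ) with hAf
      set p := (szegoPair Af (2*k)).1 z with hpdef
      set q := (szegoPair Af (2*k)).2 z with hqdef
      set a0 := ((α (2*(k:ℤ)-1) : ℝ) : ℂ)
      set Dk := ((knRecD x α k).1 : ℂ)
      set Ek := ((knRecD x α k).2 : ℂ)
      have hp : p = (2*(1-a0)*z^(k+1)*Dk + (1+a0)*z^k*(z^2-1)*Ek) / (4*z) := by
        rw [eq_div_iff h4z]
        linear_combination 2*ih1 + ih2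
      have hq : q = (2*(1-a0)*z^(k+1)*Dk - (1+a0)*z^k*(z^2-1)*Ek) / (4*z) := by
        rw [eq_div_iff h4z]
        linear_combination 2*ih1 - ih2
      have h2k : 2*(k+1) = (2*k+1)+1 := by ring
      rw [h2k]
      simp only [szegoPair, knRecD, ← hpdef, ← hqdef]
      have hc1 : (starRingEnd ℂ) (Af (2*k)) = ((α (2*(k:ℤ)) : ℝ) : ℂ) := by
        rw [hAf]; rw [Complex.conj_ofReal]; push_cast; ring_nf
      have hc2 : (starRingEnd ℂ) (Af (2*k+1)) = ((α (2*(k:ℤ)+1) : ℝ) : ℂ) := by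
        rw [hAf]; rw [Complex.conj_ofReal]; push_cast; ring_nf
      have hc3 : Af (2*k) = ((α (2*(k:ℤ)) : ℝ) : ℂ) := by
        rw [hAf]; push_cast; ring_nf
      have hc4 : Af (2*k+1) = ((α (2*(k:ℤ)+1) : ℝ) : ℂ) := by
        rw [hAf]; push_cast; ring_nf
      rw [hc1, hc2, hc3, hc4]
      push_cast
      simp only [show (2*((k:ℤ)+1)) = 2*(k:ℤ)+2 from by ring,
        show 2*(k:ℤ)+2-1 = 2*(k:ℤ)+1 from by ring]
      rw [hp, hq, hx]
      constructor
      · field_simp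
        ring
      · field_simp
        ring

/-- **Lemma 4.1, Jacobi case (key identities)**: with `α_{−1} = α_{2n−1} = −1` and real
`α_0,…,α_{2n−2} ∈ (−1,1)`, one has `Φ_{2n} = Φ_{2n}^*` and, for every `θ ∈ ℝ`,
`det(2cosθ·I − J_n) = e^{−inθ} Φ_{2n}^*(e^{iθ})`. -/
theorem jacobi_det_eq_phiStar (n : ℕ) (hn : 1 ≤ n) (α : ℤ → ℝ)
    (hm1 : α (-1) = -1) (hlast : α (2 * n - 1) = -1)
    (hα : ∀ k : ℤ, 0 ≤ k → k ≤ 2 * n - 2 → α k ∈ Set.Ioo (-1 : ℝ) 1) :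
    (∀ z : ℂ, szegoPhi (fun k => ((α k : ℝ) : ℂ)) (2 * n) z
        = szegoPhiStar (fun k => ((α k : ℝ) : ℂ)) (2 * n) z) ∧
    (∀ θ : ℝ,
      ((Matrix.det ((2 * Real.cos θ) • (1 : Matrix (Fin n) (Fin n) ℝ)
          - jacobiMatrix α n) : ℝ) : ℂ)
        = Complex.exp (-(n : ℂ) * θ * Complex.I)
            * szegoPhiStar (fun k => ((α k : ℝ) : ℂ)) (2 * n)
                (Complex.exp (θ * Complex.I))) := by
  have hcast : ((2*n-1 : ℕ) : ℤ) = 2*(n:ℤ)-1 := by omega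
  have hn1 : 2*n = (2*n-1)+1 := by omega
  have part1 : ∀ z : ℂ, szegoPhi (fun k => ((α k : ℝ) : ℂ)) (2 * n) z
      = szegoPhiStar (fun k => ((α k : ℝ) : ℂ)) (2 * n) z := by
    intro z
    have hcoef : ((α ((2*n-1 : ℕ) : ℤ) : ℝ) : ℂ) = -1 := by rw [hcast, hlast]; norm_num
    simp only [szegoPhi, szegoPhiStar]
    rw [hn1]
    simp only [szegoPair]
    rw [hcoef]
    simp only [map_neg, map_one]
    ring
  refine ⟨part1, ?_⟩
  intro θ
  have hz : Complex.exp ((θ:ℂ) * Complex.I) ≠ 0 := Complex.exp_ne_zero _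
  have hinv : Complex.exp ((θ:ℂ) * Complex.I) * Complex.exp (-(θ:ℂ) * Complex.I) = 1 := by
    rw [← Complex.exp_add, show (θ:ℂ)*Complex.I + -(θ:ℂ)*Complex.I = 0 by ring,
      Complex.exp_zero]
  have hsum : Complex.exp ((θ:ℂ) * Complex.I) + Complex.exp (-(θ:ℂ) * Complex.I)
      = ((2 * Real.cos θ : ℝ) : ℂ) := by
    rw [Complex.exp_mul_I, show (-(θ:ℂ)) * Complex.I = ((-θ:ℝ):ℂ) * Complex.I by push_cast; ring,
      Complex.exp_mul_I]
    push_cast [Complex.ofReal_cos, Complex.ofReal_sin]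
    simp [Complex.cos_neg, Complex.sin_neg]
    ring
  have hzx : (Complex.exp ((θ:ℂ) * Complex.I))^2 + 1
      = Complex.exp ((θ:ℂ) * Complex.I) * ((2 * Real.cos θ : ℝ) : ℂ) := by
    linear_combination Complex.exp ((θ:ℂ) * Complex.I) * hsum - hinv
  obtain ⟨key1, -⟩ := kn_circle_side α hm1 (2 * Real.cos θ)
    (Complex.exp ((θ:ℂ) * Complex.I)) hz hzx n
  rw [part1 (Complex.exp ((θ:ℂ) * Complex.I)), hlast] at key1
  norm_num at key1
  -- determinant side
  have hAsq : ∀ j : ℕ, j < n - 1 →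
      geronA α j ^ 2 = (1 - α (2*j - 1)) * (1 - α (2*j) ^ 2) * (1 + α (2*j + 1)) := by
    intro j hj
    have h2 : (0:ℝ) ≤ 1 - α (2*j)^2 := by
      have := hα (2*j) (by omega) (by omega)
      obtain ⟨hl, hu⟩ := this
      nlinarith
    have h3 : (0:ℝ) ≤ 1 + α (2*j+1) := by
      have := hα (2*j+1) (by omega) (by omega)
      linarith [this.1]
    have h1 : (0:ℝ) ≤ 1 - α (2*j-1) := by
      rcases Nat.eq_zero_or_pos j with h | h
      · subst h; norm_num [hm1]
      · have := hα (2*j-1) (by omega) (by omega)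
        linarith [this.2]
    rw [geronA]
    exact Real.sq_sqrt (mul_nonneg (mul_nonneg h1 h2) h3)
  have hnn : n - 1 + 1 = n := by omega
  have hDE := (knRecD_eq_det (2 * Real.cos θ) α hm1 (n-1) hAsq).1
  rw [hnn] at hDE
  -- identify the matrix
  have hM : (2 * Real.cos θ) • (1 : Matrix (Fin n) (Fin n) ℝ) - jacobiMatrix α n
      = knTriMat (fun i => 2 * Real.cos θ - geronB α i) (fun i => - geronA α i) n := by
    ext i j
    by_cases h : i = j
    · subst h
      simp [Matrix.sub_apply, Matrix.smul_apply, Matrix.one_apply, jacobiMatrix,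
        knTriMat, knTriEnt, smul_eq_mul]
    · have h' : ¬ (i:ℕ) = (j:ℕ) := fun hc => h (Fin.ext hc)
      simp only [Matrix.sub_apply, Matrix.smul_apply, Matrix.one_apply, jacobiMatrix,
        knTriMat, knTriEnt, smul_eq_mul, if_neg h, if_neg h']
      split_ifs <;> ring
  rw [hM, ← hDE]
  -- conclude
  have h2z : (2:ℂ) * Complex.exp ((θ:ℂ) * Complex.I) ≠ 0 := by simp [hz]
  have hQ : szegoPhiStar (fun k => ((α k : ℝ) : ℂ)) (2 * n) (Complex.exp ((θ:ℂ) * Complex.I))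
      = (Complex.exp ((θ:ℂ) * Complex.I))^n * (((knRecD (2 * Real.cos θ) α n).1 : ℝ) : ℂ) := by
    apply mul_left_cancel₀ h2z
    linear_combination key1
  rw [hQ]
  have hone : Complex.exp (-(n:ℂ) * θ * Complex.I) * (Complex.exp ((θ:ℂ) * Complex.I))^n
      = 1 := by
    rw [← Complex.exp_nat_mul, ← Complex.exp_add,
      show -(n:ℂ) * θ * Complex.I + (n:ℂ) * ((θ:ℂ) * Complex.I) = 0 by ring,
      Complex.exp_zero]
  linear_combination -(((knRecD (2 * Real.cos θ) α n).1 : ℂ)) * hone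

end
end

section
/- Let ν ≥ 1 and let α be a complex random variable with α ~ Θ_ν (for ν = 1, α is uniform on the unit circle). Then for all ψ, φ ∈ ℝ: E[Re(αe^{iψ})·Re(αe^{iφ})] = cos(ψ−φ)/(ν+1), E[Im(αe^{iψ})·Im(αe^{iφ})] = cos(ψ−φ)/(ν+1), and E[Re(αe^{iψ})·Im(αe^{iφ})] = sin(φ−ψ)/(ν+1). -/
open MeasureTheory ProbabilityTheory Filter Topology Finset

noncomputable section

section AuxThetaMoments
open Real intervalIntegral Set

private lemma aux_intCos2 (a e : ℝ) : ∫ θ in a..(a + 2*π), Real.cos (2*θ + e) = 0 := by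
  have h : ∀ θ : ℝ, HasDerivAt (fun x => Real.sin (2*x + e) / 2) (Real.cos (2*θ + e)) θ := by
    intro θ
    have h1 : HasDerivAt (fun x : ℝ => 2*x + e) 2 θ := by
      simpa using ((hasDerivAt_id θ).const_mul 2).add_const e
    have := (Real.hasDerivAt_sin (2*θ+e)).comp θ h1
    simpa [mul_comm] using this.div_const 2
  rw [intervalIntegral.integral_eq_sub_of_hasDerivAt (fun x _ => h x)
    ((Real.continuous_cos.comp (by continuity)).intervalIntegrable _ _)]
  have : 2*(a + 2*π) + e = 2*a + e + 2*π + 2*π := by ring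
  rw [this, Real.sin_add_two_pi, Real.sin_add_two_pi]
  ring

private lemma aux_angCC (a c d : ℝ) :
    ∫ θ in a..(a + 2*π), Real.cos (θ + c) * Real.cos (θ + d) = π * Real.cos (c - d) := by
  have hpt : ∀ θ : ℝ, Real.cos (θ + c) * Real.cos (θ + d)
      = Real.cos (2*θ + (c + d)) / 2 + Real.cos (c - d) / 2 := by
    intro θ
    have := Real.cos_add (θ + c) (θ + d)
    have h2 := Real.cos_sub (θ + c) (θ + d)
    have e1 : θ + c + (θ + d) = 2*θ + (c + d) := by ring
    have e2 : θ + c - (θ + d) = c - d := by ring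
    rw [e1] at this; rw [e2] at h2
    nlinarith [this, h2]
  simp_rw [hpt]
  rw [intervalIntegral.integral_add, intervalIntegral.integral_div, intervalIntegral.integral_div,
    aux_intCos2, intervalIntegral.integral_const]
  · simp only [smul_eq_mul]; ring
  · exact ((Real.continuous_cos.comp (by continuity)).div_const 2).intervalIntegrable _ _
  · exact intervalIntegrable_const

private lemma aux_sin_eq (x c : ℝ) : Real.sin (x + c) = Real.cos (x + (c - π/2)) := by
  rw [show x + (c - π/2) = (x + c) - π/2 by ring, Real.cos_sub_pi_div_two]

private lemma aux_angSS (a c d : ℝ) :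
    ∫ θ in a..(a + 2*π), Real.sin (θ + c) * Real.sin (θ + d) = π * Real.cos (c - d) := by
  simp_rw [aux_sin_eq]
  rw [aux_angCC]
  congr 1
  ring_nf

private lemma aux_angCS (a c d : ℝ) :
    ∫ θ in a..(a + 2*π), Real.cos (θ + c) * Real.sin (θ + d) = π * Real.sin (d - c) := by
  simp_rw [aux_sin_eq]
  rw [aux_angCC, show c - (d - π/2) = (c - d) + π/2 by ring, Real.cos_add_pi_div_two,
    show d - c = -(c - d) by ring, Real.sin_neg]

private lemma aux_radial (ν : ℝ) (hν : 1 < ν) :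
    ∫ r in (0:ℝ)..1, r^3 * (1 - r^2) ^ ((ν-3)/2) = 2 / ((ν-1)*(ν+1)) := by
  set s : ℝ := (ν-3)/2 with hs
  have hs1 : 0 < s + 1 := by rw [hs]; linarith
  have hs2 : 0 < s + 2 := by linarith
  set Φ : ℝ → ℝ := fun r => -(1-r^2)^(s+1)/(2*(s+1)) + (1-r^2)^(s+2)/(2*(s+2)) with hΦ
  have hcont : ∀ t : ℝ, 0 < t → Continuous (fun r : ℝ => (1-r^2)^t) := by
    intro t ht
    have : Continuous fun y : ℝ => y ^ t := by
      rw [continuous_iff_continuousAt]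
      exact fun y => Real.continuousAt_rpow_const y t (Or.inr ht.le)
    exact this.comp (by continuity)
  have hΦcont : Continuous Φ := by
    exact (((hcont _ hs1).neg.div_const _).add ((hcont _ hs2).div_const _))
  have hderiv : ∀ x ∈ Set.Ioo (0:ℝ) 1, HasDerivAt Φ (x^3 * (1-x^2)^s) x := by
    intro x hx
    have hu : (0:ℝ) < 1 - x^2 := by nlinarith [hx.1, hx.2]
    have hinner : HasDerivAt (fun r : ℝ => 1 - r^2) (-(2*x)) x := by
      simpa using ((hasDerivAt_pow 2 x).const_sub 1)
    have hd : ∀ t : ℝ, HasDerivAt (fun r : ℝ => (1-r^2)^t) (t * (1-x^2)^(t-1) * -(2*x)) x := by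
      intro t
      exact (Real.hasDerivAt_rpow_const (p := t) (Or.inl hu.ne')).comp x hinner
    have h1 := ((hd (s+1)).neg.div_const (2*(s+1))).add ((hd (s+2)).div_const (2*(s+2)))
    refine HasDerivAt.congr_deriv h1 ?_
    have e1 : s + 1 - 1 = s := by ring
    have e2 : s + 2 - 1 = s + 1 := by ring
    rw [e1, e2, Real.rpow_add hu s 1, Real.rpow_one]
    field_simp
    ring
  have hint : IntervalIntegrable (fun r : ℝ => r^3 * (1-r^2)^s) volume 0 1 := by
    set C : ℝ := (2:ℝ)^s + 1 with hC
    have h2s : (0:ℝ) ≤ (2:ℝ)^s := Real.rpow_nonneg (by norm_num) s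
    have hg : IntervalIntegrable (fun r : ℝ => C * (1-r)^s) volume 0 1 := by
      have h0 : IntervalIntegrable (fun x : ℝ => x ^ s) volume 0 1 :=
        intervalIntegrable_rpow' (by rw [hs]; linarith)
      have h1 : IntervalIntegrable (fun x : ℝ => (1-x) ^ s) volume 0 1 := by
        have := (h0.comp_sub_left 1).symm
        simpa using this
      exact h1.const_mul C
    apply hg.mono_fun
    · apply Measurable.aestronglyMeasurable
      measurability
    · filter_upwards [ae_restrict_mem measurableSet_uIoc] with r hr
      rw [Set.uIoc_of_le (by norm_num : (0:ℝ) ≤ 1)] at hr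
      obtain ⟨hr0, hr1⟩ := hr
      have h1r : (0:ℝ) ≤ 1 - r := by linarith
      have h1pr : (0:ℝ) ≤ 1 + r := by linarith
      have hfac : (1 - r^2 : ℝ) = (1-r) * (1+r) := by ring
      have habs : |r^3 * (1-r^2)^s| = r^3 * ((1-r)^s * (1+r)^s) := by
        rw [abs_of_nonneg, hfac, Real.mul_rpow h1r h1pr]
        exact mul_nonneg (by positivity) (Real.rpow_nonneg (by nlinarith) s)
      have hb : (1+r)^s ≤ C := by
        rcases le_or_gt 0 s with h | h
        · have : (1+r)^s ≤ (2:ℝ)^s := Real.rpow_le_rpow h1pr (by linarith) h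
          linarith
        · have : (1+r)^s ≤ (1:ℝ)^s := Real.rpow_le_rpow_of_nonpos (by norm_num) (by linarith) h.le
          rw [Real.one_rpow] at this; linarith
      have hr3 : r^3 ≤ 1 := by nlinarith
      rw [Real.norm_eq_abs, Real.norm_eq_abs, habs,
        abs_of_nonneg (mul_nonneg (le_trans h2s (by linarith)) (Real.rpow_nonneg h1r s))]
      have hrs : (0:ℝ) ≤ (1-r)^s := Real.rpow_nonneg h1r s
      have hps : (0:ℝ) ≤ (1+r)^s := Real.rpow_nonneg h1pr s
      calc r^3 * ((1-r)^s * (1+r)^s) ≤ 1 * ((1-r)^s * C) := by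
            apply mul_le_mul hr3 (mul_le_mul_of_nonneg_left hb hrs) (by positivity) (by norm_num)
        _ = C * (1-r)^s := by ring
  rw [intervalIntegral.integral_eq_sub_of_hasDerivAt_of_le (by norm_num) hΦcont.continuousOn
    hderiv hint]
  have h10 : (1:ℝ) - 1^2 = 0 := by norm_num
  have h00 : (1:ℝ) - 0^2 = 1 := by norm_num
  rw [hΦ]
  simp only [h10, h00, Real.zero_rpow hs1.ne', Real.zero_rpow hs2.ne', Real.one_rpow]
  have hν1 : ν - 1 ≠ 0 := by linarith
  have hν2 : ν + 1 ≠ 0 := by linarith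
  have e1 : 2*(s+1) = ν - 1 := by rw [hs]; ring
  have e2 : 2*(s+2) = ν + 1 := by rw [hs]; ring
  rw [e1, e2]
  field_simp
  ring

private lemma aux_theta_int (ν : ℝ) (hν : 1 ≤ ν) (h : ℝ → ℝ) (A : ℝ)
    (hA : ∀ a : ℝ, ∫ θ in a..(a + 2*π), h θ = A)
    (F : ℂ → ℝ) (hF : Continuous F)
    (hpol : ∀ r θ : ℝ, F ((r : ℂ) * Complex.exp (θ * Complex.I)) = r^2 * h θ) :
    ∫ z, F z ∂(thetaMeasure ν) = A / (π * (ν + 1)) := by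
  by_cases h1 : ν = 1
  · subst h1
    rw [thetaMeasure, if_pos rfl,
      integral_map (Measurable.aemeasurable (by measurability)) hF.aestronglyMeasurable]
    have hFh : ∀ θ : ℝ, F (Complex.exp (θ * Complex.I)) = h θ := fun θ => by
      simpa using hpol 1 θ
    simp_rw [hFh]
    rw [uniformIcoMeasure, MeasureTheory.integral_smul_measure]
    have hIco : ∫ θ in Set.Ico 0 (2*π), h θ = A := by
      rw [MeasureTheory.integral_Ico_eq_integral_Ioo, ← MeasureTheory.integral_Ioc_eq_integral_Ioo,
        ← intervalIntegral.integral_of_le (by positivity)]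
      simpa using hA 0
    rw [hIco, ENNReal.toReal_inv, ENNReal.toReal_ofReal (by positivity)]
    rw [smul_eq_mul, show π*((1:ℝ)+1) = 2*π by ring,
      eq_div_iff (by positivity : (2:ℝ)*π ≠ 0)]
    field_simp
  · have hν1 : 1 < ν := lt_of_le_of_ne hν (Ne.symm h1)
    rw [thetaMeasure, if_neg h1]
    set s : ℝ := (ν-3)/2 with hs
    set D : ℂ → ℝ := fun z => (ν - 1) / 2 * (1 - ‖z‖ ^ 2) ^ s / π with hD
    have houter : Measurable fun x : ℝ => ((ν-1)/2 * x ^ s / π).toNNReal := by measurability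
    have hinner : Measurable fun z : ℂ => 1 - ‖z‖ ^ 2 :=
      measurable_const.sub (continuous_norm.measurable.pow_const 2)
    have hDmeas : Measurable fun z => (D z).toNNReal := houter.comp hinner
    have key : ∫ z, F z ∂((volume.restrict (Metric.ball (0:ℂ) 1)).withDensity
        (fun z => ENNReal.ofReal ((ν - 1) / 2 * (1 - ‖z‖ ^ 2) ^ s / π)))
        = ∫ z in Metric.ball (0:ℂ) 1, (D z).toNNReal • F z ∂volume :=
      integral_withDensity_eq_integral_smul hDmeas F
    rw [key]
    have step1 : ∫ z in Metric.ball (0:ℂ) 1, (D z).toNNReal • F z ∂volume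
        = ∫ z, (Metric.ball (0:ℂ) 1).indicator (fun z => D z * F z) z ∂volume := by
      rw [MeasureTheory.integral_indicator measurableSet_ball]
      apply setIntegral_congr_fun measurableSet_ball
      intro z hz
      have habs : ‖z‖ < 1 := by simpa [Metric.mem_ball] using hz
      have hpos : (0:ℝ) < 1 - ‖z‖ ^ 2 := by
        nlinarith [norm_nonneg z]
      have hDnn : 0 ≤ D z := by
        rw [hD]
        exact div_nonneg (mul_nonneg (by linarith) (Real.rpow_nonneg hpos.le s)) Real.pi_pos.le
      simp [NNReal.smul_def, Real.coe_toNNReal _ hDnn]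
    rw [step1, ← Complex.integral_comp_polarCoord_symm]
    set G1 : ℝ → ℝ := (Set.Ioo (0:ℝ) 1).indicator
      (fun r => r^3 * ((ν - 1) / 2 * (1 - r^2) ^ s / π)) with hG1
    have step2 : ∫ p in polarCoord.target,
        p.1 • (Metric.ball (0:ℂ) 1).indicator (fun z => D z * F z) (Complex.polarCoord.symm p)
        = ∫ p in polarCoord.target, G1 p.1 * h p.2 := by
      apply setIntegral_congr_fun (polarCoord.open_target.measurableSet)
      rintro ⟨r, θ⟩ hp
      simp only [polarCoord_target, Set.mem_prod, Set.mem_Ioi, Set.mem_Ioo] at hp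
      obtain ⟨hr, hθ⟩ := hp
      dsimp only
      have hsymm : Complex.polarCoord.symm (r, θ) = (r:ℂ) * Complex.exp (θ * Complex.I) := by
        rw [Complex.polarCoord_symm_apply, Complex.exp_mul_I]
        simp [Complex.ofReal_cos, Complex.ofReal_sin]
      have habs : ‖Complex.polarCoord.symm (r, θ)‖ = r := by
        rw [Complex.norm_polarCoord_symm]; exact abs_of_pos hr
      by_cases hlt : r < 1
      · have hmem : Complex.polarCoord.symm (r, θ) ∈ Metric.ball (0:ℂ) 1 :=
          Metric.mem_ball.mpr (by rw [Complex.dist_eq, sub_zero, habs]; exact hlt)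
        rw [Set.indicator_of_mem hmem, hG1, Set.indicator_of_mem (by exact ⟨hr, hlt⟩)]
        have hDval : D (Complex.polarCoord.symm (r, θ)) = (ν - 1) / 2 * (1 - r^2) ^ s / π := by
          rw [hD]; simp [habs]
        have hFval : F (Complex.polarCoord.symm (r, θ)) = r^2 * h θ := by
          rw [hsymm]; exact hpol r θ
        simp only [smul_eq_mul, hDval, hFval]
        ring
      · have hmem : Complex.polarCoord.symm (r, θ) ∉ Metric.ball (0:ℂ) 1 := by
          intro hm
          have := Metric.mem_ball.mp hm
          rw [Complex.dist_eq, sub_zero, habs] at this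
          exact hlt this
        rw [Set.indicator_of_notMem hmem, hG1,
          Set.indicator_of_notMem (by simp [Set.mem_Ioo]; intro _; linarith [not_lt.mp hlt])]
        simp
    rw [step2, polarCoord_target, MeasureTheory.Measure.volume_eq_prod,
      MeasureTheory.setIntegral_prod_mul]
    have hrad : ∫ r in Set.Ioi (0:ℝ), G1 r = ((ν-1)/(2*π)) * (2 / ((ν-1)*(ν+1))) := by
      rw [hG1, MeasureTheory.setIntegral_indicator measurableSet_Ioo,
        show Set.Ioi (0:ℝ) ∩ Set.Ioo 0 1 = Set.Ioo 0 1 from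
          Set.inter_eq_self_of_subset_right Set.Ioo_subset_Ioi_self,
        ← MeasureTheory.integral_Ioc_eq_integral_Ioo,
        ← intervalIntegral.integral_of_le (by norm_num : (0:ℝ) ≤ 1)]
      have : ∀ r : ℝ, r^3 * ((ν - 1) / 2 * (1 - r^2) ^ s / π)
          = ((ν-1)/(2*π)) * (r^3 * (1 - r^2) ^ s) := by intro r; field_simp
      simp_rw [this]
      rw [intervalIntegral.integral_const_mul, hs, aux_radial ν hν1]
    have hang : ∫ θ in Set.Ioo (-π) π, h θ = A := by
      rw [← MeasureTheory.integral_Ioc_eq_integral_Ioo,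
        ← intervalIntegral.integral_of_le (by linarith [Real.pi_pos])]
      have := hA (-π)
      rwa [show -π + 2*π = π by ring] at this
    rw [hrad, hang]
    have hπ : (π:ℝ) ≠ 0 := Real.pi_ne_zero
    have h2 : ν - 1 ≠ 0 := by linarith
    have h3 : ν + 1 ≠ 0 := by linarith
    clear hG1 hD hs key step1 step2 hrad hang hDmeas houter hinner
    clear G1 D s
    field_simp

private lemma aux_re_rot (r θ c : ℝ) :
    ((r:ℂ) * Complex.exp (θ * Complex.I) * Complex.exp (c * Complex.I)).re
      = r * Real.cos (θ + c) := by
  have e : (θ:ℂ)*Complex.I + (c:ℂ)*Complex.I = ((θ+c : ℝ):ℂ)*Complex.I := by push_cast; ring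
  rw [mul_assoc, ← Complex.exp_add, e, Complex.re_ofReal_mul, Complex.exp_ofReal_mul_I_re]

private lemma aux_im_rot (r θ c : ℝ) :
    ((r:ℂ) * Complex.exp (θ * Complex.I) * Complex.exp (c * Complex.I)).im
      = r * Real.sin (θ + c) := by
  have e : (θ:ℂ)*Complex.I + (c:ℂ)*Complex.I = ((θ+c : ℝ):ℂ)*Complex.I := by push_cast; ring
  rw [mul_assoc, ← Complex.exp_add, e, Complex.im_ofReal_mul, Complex.exp_ofReal_mul_I_im]

end AuxThetaMoments

/-- **Lemma 4.3 (second-moment identities)**: for `α ~ Θ_ν`, `ν ≥ 1`, and all `ψ, φ ∈ ℝ`: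
`E[Re(αe^{iψ})Re(αe^{iφ})] = E[Im(αe^{iψ})Im(αe^{iφ})] = cos(ψ−φ)/(ν+1)` and
`E[Re(αe^{iψ})Im(αe^{iφ})] = sin(φ−ψ)/(ν+1)`. -/
theorem theta_dist_second_moments (ν : ℝ) (hν : 1 ≤ ν)
    {Ω : Type} [MeasurableSpace Ω] (P : Measure Ω) [IsProbabilityMeasure P]
    (α : Ω → ℂ) (hmeas : Measurable α) (hlaw : Measure.map α P = thetaMeasure ν)
    (ψ φ : ℝ) :
    (∫ ω, (α ω * Complex.exp (ψ * Complex.I)).re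
        * (α ω * Complex.exp (φ * Complex.I)).re ∂P
      = Real.cos (ψ - φ) / (ν + 1)) ∧
    (∫ ω, (α ω * Complex.exp (ψ * Complex.I)).im
        * (α ω * Complex.exp (φ * Complex.I)).im ∂P
      = Real.cos (ψ - φ) / (ν + 1)) ∧
    (∫ ω, (α ω * Complex.exp (ψ * Complex.I)).re
        * (α ω * Complex.exp (φ * Complex.I)).im ∂P
      = Real.sin (φ - ψ) / (ν + 1)) := by
  have hπ : (Real.pi:ℝ) ≠ 0 := Real.pi_ne_zero
  refine ⟨?_, ?_, ?_⟩
  · have hF : Continuous fun z : ℂ =>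
        (z * Complex.exp (↑ψ * Complex.I)).re * (z * Complex.exp (↑φ * Complex.I)).re :=
      (Complex.continuous_re.comp (continuous_id.mul continuous_const)).mul
        (Complex.continuous_re.comp (continuous_id.mul continuous_const))
    have hval := aux_theta_int ν hν (fun θ => Real.cos (θ+ψ) * Real.cos (θ+φ))
      (Real.pi * Real.cos (ψ-φ)) (fun a => aux_angCC a ψ φ) _ hF
      (fun r θ => by rw [aux_re_rot r θ ψ, aux_re_rot r θ φ]; ring)
    calc ∫ ω, (α ω * Complex.exp (↑ψ * Complex.I)).re
          * (α ω * Complex.exp (↑φ * Complex.I)).re ∂P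
        = ∫ z, (z * Complex.exp (↑ψ * Complex.I)).re * (z * Complex.exp (↑φ * Complex.I)).re
            ∂(Measure.map α P) :=
          (integral_map hmeas.aemeasurable hF.aestronglyMeasurable).symm
      _ = Real.pi * Real.cos (ψ-φ) / (Real.pi * (ν+1)) := by rw [hlaw]; exact hval
      _ = Real.cos (ψ-φ) / (ν+1) := by rw [mul_div_mul_left _ _ hπ]
  · have hF : Continuous fun z : ℂ =>
        (z * Complex.exp (↑ψ * Complex.I)).im * (z * Complex.exp (↑φ * Complex.I)).im :=
      (Complex.continuous_im.comp (continuous_id.mul continuous_const)).mul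
        (Complex.continuous_im.comp (continuous_id.mul continuous_const))
    have hval := aux_theta_int ν hν (fun θ => Real.sin (θ+ψ) * Real.sin (θ+φ))
      (Real.pi * Real.cos (ψ-φ)) (fun a => aux_angSS a ψ φ) _ hF
      (fun r θ => by rw [aux_im_rot r θ ψ, aux_im_rot r θ φ]; ring)
    calc ∫ ω, (α ω * Complex.exp (↑ψ * Complex.I)).im
          * (α ω * Complex.exp (↑φ * Complex.I)).im ∂P
        = ∫ z, (z * Complex.exp (↑ψ * Complex.I)).im * (z * Complex.exp (↑φ * Complex.I)).im
            ∂(Measure.map α P) :=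
          (integral_map hmeas.aemeasurable hF.aestronglyMeasurable).symm
      _ = Real.pi * Real.cos (ψ-φ) / (Real.pi * (ν+1)) := by rw [hlaw]; exact hval
      _ = Real.cos (ψ-φ) / (ν+1) := by rw [mul_div_mul_left _ _ hπ]
  · have hF : Continuous fun z : ℂ =>
        (z * Complex.exp (↑ψ * Complex.I)).re * (z * Complex.exp (↑φ * Complex.I)).im :=
      (Complex.continuous_re.comp (continuous_id.mul continuous_const)).mul
        (Complex.continuous_im.comp (continuous_id.mul continuous_const))
    have hval := aux_theta_int ν hν (fun θ => Real.cos (θ+ψ) * Real.sin (θ+φ))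
      (Real.pi * Real.sin (φ-ψ)) (fun a => aux_angCS a ψ φ) _ hF
      (fun r θ => by rw [aux_re_rot r θ ψ, aux_im_rot r θ φ]; ring)
    calc ∫ ω, (α ω * Complex.exp (↑ψ * Complex.I)).re
          * (α ω * Complex.exp (↑φ * Complex.I)).im ∂P
        = ∫ z, (z * Complex.exp (↑ψ * Complex.I)).re * (z * Complex.exp (↑φ * Complex.I)).im
            ∂(Measure.map α P) :=
          (integral_map hmeas.aemeasurable hF.aestronglyMeasurable).symm
      _ = Real.pi * Real.sin (φ-ψ) / (Real.pi * (ν+1)) := by rw [hlaw]; exact hval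
      _ = Real.sin (φ-ψ) / (ν+1) := by rw [mul_div_mul_left _ _ hπ]


end
end

section
/- Let δ ∈ (0, 2π) and let (ε_k)_{k≥0}, (X_k)_{k≥0}, (Y_k)_{k≥0} be real sequences satisfying X_{k+1} = X_k + δ + Y_k for all k. Then for every n ≥ 1, |Σ_{k=0}^{n−1} ε_k e^{iX_k}| ≤ (2·sup_{0≤k≤n−1}|ε_k| + Σ_{k=1}^{n−1}|ε_k − ε_{k−1}| + Σ_{k=0}^{n−1}|ε_k Y_k|) / |1 − e^{iδ}|. -/
open MeasureTheory ProbabilityTheory Filter Topology Finset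

noncomputable section

lemma abs_exp_mul_I_sub_one_le_abs (t : ℝ) :
    ‖Complex.exp (t * Complex.I) - 1‖ ≤ |t| := by
  rw [Complex.norm_def, ← Real.sqrt_sq_eq_abs]
  apply Real.sqrt_le_sqrt
  rw [Complex.normSq_apply]
  have h1 : (Complex.exp (t * Complex.I) - 1).re = Real.cos t - 1 := by
    simp [Complex.exp_ofReal_mul_I_re]
  have h2 : (Complex.exp (t * Complex.I) - 1).im = Real.sin t := by
    simp [Complex.exp_ofReal_mul_I_im]
  rw [h1, h2]
  nlinarith [Real.sin_sq_add_cos_sq t, Real.one_sub_sq_div_two_le_cos (x := t)]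

/-- **Summation by parts bound** (Lemma 4.5): if `X_{k+1} = X_k + δ + Y_k` with `δ ∈ (0,2π)`,
then `|Σ_{k<n} ε_k e^{iX_k}|` is controlled by `(2 sup|ε_k| + Σ|ε_k − ε_{k−1}| + Σ|ε_k Y_k|)/|1 − e^{iδ}|`. -/
theorem linear_statistics_sum_by_parts
    (δ : ℝ) (hδ : δ ∈ Set.Ioo 0 (2 * Real.pi))
    (ε X Y : ℕ → ℝ) (hX : ∀ k, X (k + 1) = X k + δ + Y k)
    (n : ℕ) (hn : 1 ≤ n) :
    ‖∑ k ∈ Finset.range n, (ε k : ℂ) * Complex.exp (X k * Complex.I)‖ ≤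
      (2 * ((Finset.range n).sup' (Finset.nonempty_range_iff.mpr (by omega)) fun k => |ε k|)
        + ∑ k ∈ Finset.range (n - 1), |ε (k + 1) - ε k|
        + ∑ k ∈ Finset.range n, |ε k * Y k|)
      / ‖1 - Complex.exp (δ * Complex.I)‖ := by
  obtain ⟨m, rfl⟩ : ∃ m, n = m + 1 := ⟨n - 1, by omega⟩
  obtain ⟨hδ0, hδ2⟩ := hδ
  set E : ℕ → ℂ := fun k => Complex.exp ((X k : ℝ) * Complex.I) with hE
  set c : ℂ := 1 - Complex.exp ((δ : ℝ) * Complex.I) with hc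
  set S : ℂ := ∑ k ∈ Finset.range (m + 1), (ε k : ℂ) * E k with hS
  have hcpos : 0 < ‖c‖ := by
    rw [hc]
    have hne : Complex.exp ((δ : ℝ) * Complex.I) ≠ 1 := by
      intro h
      rw [Complex.exp_eq_one_iff] at h
      obtain ⟨k, hk⟩ := h
      have hI : (Complex.I : ℂ) ≠ 0 := Complex.I_ne_zero
      have hδc : (δ : ℂ) = k * (2 * Real.pi) := by
        have : (δ : ℂ) * Complex.I = ((k : ℂ) * (2 * Real.pi)) * Complex.I := by
          rw [hk]; ring
        exact mul_right_cancel₀ hI this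
      have hδr : δ = (k : ℝ) * (2 * Real.pi) := by exact_mod_cast hδc
      have h1 : (0 : ℝ) < (k : ℝ) := by nlinarith [Real.pi_pos]
      have h2 : (k : ℝ) < 1 := by nlinarith [Real.pi_pos]
      have h1' : (0 : ℤ) < k := by exact_mod_cast h1
      have h2' : (k : ℤ) < 1 := by exact_mod_cast h2
      omega
    have : c ≠ 0 := sub_ne_zero.mpr (Ne.symm hne)
    simpa using this
  have hEk : ∀ k, E (k + 1) * Complex.exp ((-(Y k) : ℝ) * Complex.I)
      = Complex.exp ((δ : ℝ) * Complex.I) * E k := by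
    intro k
    simp only [hE, ← Complex.exp_add]
    congr 1
    rw [hX k]
    push_cast
    ring
  have key : c * S = (ε 0 : ℂ) * E 0 - (ε m : ℂ) * E (m + 1)
      + ∑ k ∈ Finset.range m, ((ε (k + 1) : ℂ) - (ε k : ℂ)) * E (k + 1)
      - ∑ k ∈ Finset.range (m + 1),
          (ε k : ℂ) * E (k + 1) * (Complex.exp ((-(Y k) : ℝ) * Complex.I) - 1) := by
    have h1 : c * S = S - ∑ k ∈ Finset.range (m + 1),
        (ε k : ℂ) * (E (k + 1) * Complex.exp ((-(Y k) : ℝ) * Complex.I)) := by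
      rw [hc, sub_mul, one_mul, Finset.mul_sum]
      congr 1
      refine Finset.sum_congr rfl fun k _ => ?_
      rw [hEk k]; ring
    have h2 : ∑ k ∈ Finset.range (m + 1),
          (ε k : ℂ) * (E (k + 1) * Complex.exp ((-(Y k) : ℝ) * Complex.I))
        = ∑ k ∈ Finset.range (m + 1), (ε k : ℂ) * E (k + 1)
          + ∑ k ∈ Finset.range (m + 1),
              (ε k : ℂ) * E (k + 1) * (Complex.exp ((-(Y k) : ℝ) * Complex.I) - 1) := by
      rw [← Finset.sum_add_distrib]
      refine Finset.sum_congr rfl fun k _ => ?_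
      ring
    have h3 : S - ∑ k ∈ Finset.range (m + 1), (ε k : ℂ) * E (k + 1)
        = (ε 0 : ℂ) * E 0 - (ε m : ℂ) * E (m + 1)
          + ∑ k ∈ Finset.range m, ((ε (k + 1) : ℂ) - (ε k : ℂ)) * E (k + 1) := by
      rw [hS, Finset.sum_range_succ' (fun k => (ε k : ℂ) * E k) m, Finset.sum_range_succ,
        show ∑ k ∈ Finset.range m, ((ε (k + 1) : ℂ) - (ε k : ℂ)) * E (k + 1)
          = ∑ k ∈ Finset.range m, ((ε (k + 1) : ℂ) * E (k + 1) - (ε k : ℂ) * E (k + 1)) from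
          Finset.sum_congr rfl fun k _ => by ring,
        Finset.sum_sub_distrib]
      push_cast
      ring
    rw [h1, h2]
    linear_combination h3
  set ρ : ℝ := (Finset.range (m + 1)).sup'
      (Finset.nonempty_range_iff.mpr (by omega)) (fun k => |ε k|) with hρ
  have hρk : ∀ k ∈ Finset.range (m + 1), |ε k| ≤ ρ := fun k hk => by rw [hρ]; exact Finset.le_sup' (fun j => |ε j|) hk
  have hEnorm : ∀ k, ‖E k‖ = 1 := fun k => Complex.norm_exp_ofReal_mul_I _
  have habs : ‖c * S‖ ≤
      2 * ρ + ∑ k ∈ Finset.range m, |ε (k + 1) - ε k|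
        + ∑ k ∈ Finset.range (m + 1), |ε k * Y k| := by
    rw [key]
    have b1 : ‖(ε 0 : ℂ) * E 0‖ ≤ ρ := by
      rw [norm_mul, hEnorm, mul_one, Complex.norm_real, Real.norm_eq_abs]
      exact hρk 0 (Finset.mem_range.mpr (by omega))
    have b2 : ‖(ε m : ℂ) * E (m + 1)‖ ≤ ρ := by
      rw [norm_mul, hEnorm, mul_one, Complex.norm_real, Real.norm_eq_abs]
      exact hρk m (Finset.mem_range.mpr (by omega))
    have b3 : ‖∑ k ∈ Finset.range m, ((ε (k + 1) : ℂ) - (ε k : ℂ)) * E (k + 1)‖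
        ≤ ∑ k ∈ Finset.range m, |ε (k + 1) - ε k| := by
      refine (norm_sum_le _ _).trans (Finset.sum_le_sum fun k _ => ?_)
      rw [norm_mul, hEnorm, mul_one]
      have : ((ε (k + 1) : ℂ) - (ε k : ℂ)) = ((ε (k + 1) - ε k : ℝ) : ℂ) := by push_cast; ring
      rw [this, Complex.norm_real, Real.norm_eq_abs]
    have b4 : ‖∑ k ∈ Finset.range (m + 1),
          (ε k : ℂ) * E (k + 1) * (Complex.exp ((-(Y k) : ℝ) * Complex.I) - 1)‖
        ≤ ∑ k ∈ Finset.range (m + 1), |ε k * Y k| := by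
      refine (norm_sum_le _ _).trans (Finset.sum_le_sum fun k _ => ?_)
      rw [norm_mul, norm_mul, hEnorm, mul_one, Complex.norm_real, Real.norm_eq_abs]
      have := abs_exp_mul_I_sub_one_le_abs (-(Y k))
      rw [abs_neg] at this
      calc |ε k| * ‖Complex.exp ((-(Y k) : ℝ) * Complex.I) - 1‖
          ≤ |ε k| * |Y k| := by
            exact mul_le_mul_of_nonneg_left (by simpa using this)
              (abs_nonneg _)
        _ = |ε k * Y k| := (abs_mul _ _).symm
    calc ‖(ε 0 : ℂ) * E 0 - (ε m : ℂ) * E (m + 1)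
          + ∑ k ∈ Finset.range m, ((ε (k + 1) : ℂ) - (ε k : ℂ)) * E (k + 1)
          - ∑ k ∈ Finset.range (m + 1),
              (ε k : ℂ) * E (k + 1) * (Complex.exp ((-(Y k) : ℝ) * Complex.I) - 1)‖
        ≤ ‖(ε 0 : ℂ) * E 0 - (ε m : ℂ) * E (m + 1)
            + ∑ k ∈ Finset.range m, ((ε (k + 1) : ℂ) - (ε k : ℂ)) * E (k + 1)‖
          + ‖∑ k ∈ Finset.range (m + 1),
              (ε k : ℂ) * E (k + 1) * (Complex.exp ((-(Y k) : ℝ) * Complex.I) - 1)‖ :=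
          norm_sub_le _ _
      _ ≤ (‖(ε 0 : ℂ) * E 0 - (ε m : ℂ) * E (m + 1)‖
            + ‖∑ k ∈ Finset.range m, ((ε (k + 1) : ℂ) - (ε k : ℂ)) * E (k + 1)‖)
          + ‖∑ k ∈ Finset.range (m + 1),
              (ε k : ℂ) * E (k + 1) * (Complex.exp ((-(Y k) : ℝ) * Complex.I) - 1)‖ := by
          gcongr
          exact norm_add_le _ _
      _ ≤ ((‖(ε 0 : ℂ) * E 0‖ + ‖(ε m : ℂ) * E (m + 1)‖)
            + ∑ k ∈ Finset.range m, |ε (k + 1) - ε k|)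
          + ∑ k ∈ Finset.range (m + 1), |ε k * Y k| := by
          gcongr
          · exact norm_sub_le _ _
      _ ≤ ((ρ + ρ) + ∑ k ∈ Finset.range m, |ε (k + 1) - ε k|)
          + ∑ k ∈ Finset.range (m + 1), |ε k * Y k| := by gcongr
      _ = 2 * ρ + ∑ k ∈ Finset.range m, |ε (k + 1) - ε k|
          + ∑ k ∈ Finset.range (m + 1), |ε k * Y k| := by ring
  have hgoal : ‖S‖ ≤
      (2 * ρ + ∑ k ∈ Finset.range m, |ε (k + 1) - ε k|
        + ∑ k ∈ Finset.range (m + 1), |ε k * Y k|) / ‖c‖ := by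
    rw [le_div_iff₀ hcpos]
    calc ‖S‖ * ‖c‖ = ‖c * S‖ := by
          rw [norm_mul, mul_comm]
      _ ≤ _ := habs
  simpa [hρ, Nat.add_sub_cancel] using hgoal

end
end
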